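/- arXiv:2302.07615 — 6 statements merged into one kernel-verified Lean document; each statement's English description precedes it below -/
import Mathlib

section
/- Fix integers n ≥ 1, q ≥ 1, d = q·n and reals γ > 0, 0 ≤ τ ≤ 1, 0 ≤ p ≤ 1, μ > 0, δ ≥ 0. Suppose Z, F_1, …, F_n, F satisfy Assumptions 1–3, and let z* ∈ Z be a solution of the VI for F on Z. Fix z, m, u ∈ Z, and let û ∈ Z be a solution of the VI on Z for the operator G(w) = F_1(w) − F_1(m) + F(m) + (1/γ)(w − z − τ(m − z)). For a permutation π of {1, …, d}, set z⁺(π) = proj_Z[u + γ·(1/n)∑_{i=1}^n Q_i^π(F_i(m) − F_1(m) − F_i(u) + F_1(u))]. Then, with E_π denoting the average over a uniformly random permutation π of {1, …, d}: E_π‖z⁺(π) − z*‖² + p‖z − z*‖² + (1 − p)‖m − z*‖² ≤ (1 − τ + p − γμ/2)‖z − z*‖² + (1 + τ − p − γμ/2)‖m − z*‖² + (2 + 4γδ²/μ + 4/(γμ) + 8γ²δ²)‖u − û‖² − (1 − τ − 3γμ/2)‖z − û‖² − (τ − 3γμ/2 − 8γ²δ²)‖m − û‖². -/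
/-!
The projection onto `Z` does not increase the distance to `z* ∈ Z`, so it suffices to average
`‖u + γ X_π - z*‖²` with `X_π = (1/n) ∑ᵢ Q_i^π(yᵢ)`. For fixed `π` the compressors act on disjoint
blocks, so `X_π` is the vector whose coordinate `π j` is read off `y_{block j}`; averaging over `π`
makes every coordinate uniform, whence `E X_π = (1/n) ∑ᵢ yᵢ` and `E ‖X_π‖² = (1/n) ∑ᵢ ‖yᵢ‖²`.
Writing `yᵢ = wᵢ - w₁` with `wᵢ = (Fᵢ - F)(m) - (Fᵢ - F)(u)`, so that `∑ wᵢ = 0`, δ-relatedness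
bounds the second moment by `2δ²‖m - u‖²`. The rest is deterministic: the variational inequality
of the subproblem tested at `z*`, strong monotonicity and the three-point identity control
`‖û - z*‖²` through the anchor `z + τ(m - z)`, and Young's inequality absorbs the error of
stepping from `u` instead of `û`.
-/

open scoped RealInnerProductSpace

noncomputable section

/-- Permutation compressor `Q_i^π` (case `d = q·n`): for a permutation `π` of the
`d` coordinates, device `i` keeps the coordinates `π_j` for `j` in its block of
size `q` (0-indexed: `q·i ≤ j < q·(i+1)`) and rescales by `n`. -/
def Qperm (n q d : ℕ) (π : Equiv.Perm (Fin d)) (i : Fin n)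
    (u : EuclideanSpace ℝ (Fin d)) : EuclideanSpace ℝ (Fin d) :=
  (n : ℝ) • ∑ j ∈ Finset.univ.filter
      (fun j : Fin d => q * (i : ℕ) ≤ (j : ℕ) ∧ (j : ℕ) < q * ((i : ℕ) + 1)),
    EuclideanSpace.single (π j) (u (π j))

open Finset

theorem two_mul_le_mul_sq_add_sq_div {ε : ℝ} (hε : 0 < ε) (a b : ℝ) :
    2 * a * b ≤ ε * a ^ 2 + b ^ 2 / ε := by
  have h : 0 ≤ (ε * a - b) ^ 2 / ε := by positivity
  have e : (ε * a - b) ^ 2 / ε = ε * a ^ 2 - 2 * a * b + b ^ 2 / ε := by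
    field_simp
    ring
  linarith

theorem sum_sub_eq_zero_of_eq_inv_smul_sum {α E : Type*} [AddCommGroup E] [Module ℝ E] {n : ℕ}
    (hn : n ≠ 0) {f : Fin n → α → E} {g : α → E} (hg : ∀ x, g x = (n : ℝ)⁻¹ • ∑ i, f i x)
    (x : α) : ∑ i, (f i x - g x) = 0 := by
  rw [sum_sub_distrib, sum_const, card_univ, Fintype.card_fin, ← Nat.cast_smul_eq_nsmul ℝ, hg,
    smul_inv_smul₀ (Nat.cast_ne_zero.mpr hn), sub_self]

section InnerProduct

variable {E : Type*} [NormedAddCommGroup E] [InnerProductSpace ℝ E]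

theorem norm_sub_sq_le_of_inner_nonpos {x p y : E} (h : ⟪x - p, y - p⟫ ≤ 0) :
    ‖p - y‖ ^ 2 ≤ ‖x - y‖ ^ 2 := by
  have hxp : ⟪x - p, p - y⟫ = -⟪x - p, y - p⟫ := by rw [← inner_neg_right, neg_sub]
  rw [show x - y = (x - p) + (p - y) by abel, norm_add_sq_real, hxp]
  nlinarith [sq_nonneg ‖x - p‖]

theorem norm_add_sq_le_add_mul {ε : ℝ} (hε : 0 < ε) (a b : E) :
    ‖a + b‖ ^ 2 ≤ (1 + ε) * ‖a‖ ^ 2 + (1 + ε⁻¹) * ‖b‖ ^ 2 := by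
  rw [norm_add_sq_real]
  have young := two_mul_le_mul_sq_add_sq_div hε ‖a‖ ‖b‖
  rw [div_eq_inv_mul] at young
  linarith [real_inner_le_norm a b]

theorem norm_add_smul_sub_sq (x y : E) (τ : ℝ) :
    ‖x + τ • (y - x)‖ ^ 2 = (1 - τ) * ‖x‖ ^ 2 + τ * ‖y‖ ^ 2 - τ * (1 - τ) * ‖x - y‖ ^ 2 := by
  rw [show x + τ • (y - x) = (1 - τ) • x + τ • y by module, norm_add_sq_real, norm_sub_sq_real,
    norm_smul, norm_smul, real_inner_smul_left, real_inner_smul_right, mul_pow, mul_pow,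
    Real.norm_eq_abs, Real.norm_eq_abs, sq_abs, sq_abs]
  ring

theorem average_norm_add_smul_sub_sq {κ : Type*} [Fintype κ] [Nonempty κ] (u z : E) (γ : ℝ)
    (X : κ → E) :
    (Fintype.card κ : ℝ)⁻¹ * ∑ i, ‖u + γ • X i - z‖ ^ 2
      = ‖u - z‖ ^ 2 + 2 * γ * ⟪(Fintype.card κ : ℝ)⁻¹ • ∑ i, X i, u - z⟫
        + γ ^ 2 * ((Fintype.card κ : ℝ)⁻¹ * ∑ i, ‖X i‖ ^ 2) := by
  have expand : ∀ i, ‖u + γ • X i - z‖ ^ 2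
      = ‖u - z‖ ^ 2 + 2 * γ * ⟪X i, u - z⟫ + γ ^ 2 * ‖X i‖ ^ 2 := fun i => by
    rw [show u + γ • X i - z = (u - z) + γ • X i by abel, norm_add_sq_real, real_inner_smul_right,
      norm_smul, mul_pow, Real.norm_eq_abs, sq_abs, real_inner_comm]
    ring
  have hκ : (Fintype.card κ : ℝ) ≠ 0 := by positivity
  simp only [expand, sum_add_distrib, sum_const, card_univ, nsmul_eq_mul, ← mul_sum,
    real_inner_smul_left, ← sum_inner]
  field_simp

theorem sum_norm_sub_sq_of_sum_eq_zero {κ : Type*} [Fintype κ] {w : κ → E}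
    (hw : ∑ i, w i = 0) (a : E) :
    ∑ i, ‖w i - a‖ ^ 2 = ∑ i, ‖w i‖ ^ 2 + Fintype.card κ * ‖a‖ ^ 2 := by
  simp only [norm_sub_sq_real, sum_add_distrib, sum_sub_distrib, ← mul_sum, ← sum_inner, hw,
    inner_zero_left, sum_const, card_univ, nsmul_eq_mul]
  ring

theorem average_norm_sub_sq_le {κ : Type*} [Fintype κ] {w : κ → E} (hw : ∑ i, w i = 0) {r : ℝ}
    (hr : ∀ i, ‖w i‖ ≤ r) (j : κ) :
    (Fintype.card κ : ℝ)⁻¹ * ∑ i, ‖w i - w j‖ ^ 2 ≤ 2 * r ^ 2 := by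
  have hsq : ∀ i, ‖w i‖ ^ 2 ≤ r ^ 2 := fun i => pow_le_pow_left₀ (norm_nonneg _) (hr i) 2
  have hsum : ∑ i, ‖w i‖ ^ 2 ≤ Fintype.card κ * r ^ 2 := by
    simpa using sum_le_sum fun i (_ : i ∈ univ) => hsq i
  have hκ : (0 : ℝ) < Fintype.card κ := by
    have : Nonempty κ := ⟨j⟩
    positivity
  rw [sum_norm_sub_sq_of_sum_eq_zero hw, inv_mul_le_iff₀ hκ]
  nlinarith [hsq j]

theorem prox_step_le {γ μ : ℝ} (hγ : 0 < γ) {g t S w zstar : E}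
    (hVI : 0 ≤ ⟪g + t + (1 / γ) • (w - S), zstar - w⟫)
    (hg : μ * ‖w - zstar‖ ^ 2 ≤ ⟪g, w - zstar⟫) :
    (1 + 2 * γ * μ) * ‖w - zstar‖ ^ 2
      ≤ ‖S - zstar‖ ^ 2 - ‖S - w‖ ^ 2 + 2 * γ * ⟪t, zstar - w⟫ := by
  have three_point : 2 * ⟪w - S, zstar - w⟫ = ‖S - zstar‖ ^ 2 - ‖S - w‖ ^ 2 - ‖w - zstar‖ ^ 2 := by
    rw [show S - zstar = (S - w) + (w - zstar) by abel, norm_add_sq_real, ← neg_sub S w,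
      ← neg_sub w zstar, inner_neg_neg]
    ring
  have hg' : ⟪g, zstar - w⟫ = -⟪g, w - zstar⟫ := by rw [← inner_neg_right, neg_sub]
  rw [inner_add_left, inner_add_left, real_inner_smul_left, hg'] at hVI
  have hscale : 2 * γ * (1 / γ * ⟪w - S, zstar - w⟫) = 2 * ⟪w - S, zstar - w⟫ := by
    field_simp
  nlinarith [mul_le_mul_of_nonneg_left hVI (by positivity : (0 : ℝ) ≤ 2 * γ)]

theorem server_step_le {γ μ τ : ℝ} (hγμ : 0 ≤ γ * μ) {z m w zstar t : E}
    (hprox : (1 + 2 * γ * μ) * ‖w - zstar‖ ^ 2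
      ≤ ‖z + τ • (m - z) - zstar‖ ^ 2 - ‖z + τ • (m - z) - w‖ ^ 2 + 2 * γ * ⟪t, zstar - w⟫) :
    (1 + γ * μ / 2) * ‖w - zstar‖ ^ 2 + 2 * γ * ⟪t, w - zstar⟫
      ≤ (1 - τ - γ * μ / 2) * ‖z - zstar‖ ^ 2 + (τ - γ * μ / 2) * ‖m - zstar‖ ^ 2
        - (1 - τ - 3 * γ * μ / 2) * ‖z - w‖ ^ 2 - (τ - 3 * γ * μ / 2) * ‖m - w‖ ^ 2 := by
  have convex : ∀ v, ‖z + τ • (m - z) - v‖ ^ 2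
      = (1 - τ) * ‖z - v‖ ^ 2 + τ * ‖m - v‖ ^ 2 - τ * (1 - τ) * ‖z - m‖ ^ 2 := fun v => by
    rw [show z + τ • (m - z) - v = (z - v) + τ • ((m - v) - (z - v)) by module,
      norm_add_smul_sub_sq, sub_sub_sub_cancel_right]
  have hz := norm_add_sq_le_add_mul two_pos (z - w) (w - zstar)
  have hm := norm_add_sq_le_add_mul two_pos (m - w) (w - zstar)
  rw [sub_add_sub_cancel] at hz hm
  have ht : ⟪t, w - zstar⟫ = -⟪t, zstar - w⟫ := by rw [← inner_neg_right, neg_sub]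
  rw [convex, convex] at hprox
  rw [ht]
  norm_num at hz hm
  linarith [mul_le_mul_of_nonneg_left hz (by positivity : 0 ≤ γ * μ / 2),
    mul_le_mul_of_nonneg_left hm (by positivity : 0 ≤ γ * μ / 2)]

theorem inexact_solution_error_le {γ μ δ : ℝ} (hγ : 0 < γ) (hμ : 0 < μ)
    {u w zstar m au aw am : E} (hwm : ‖aw - am‖ ≤ δ * ‖w - m‖) (hwu : ‖aw - au‖ ≤ δ * ‖w - u‖) :
    ‖u - zstar‖ ^ 2 - 2 * γ * ⟪am - au, u - zstar⟫ + 2 * γ ^ 2 * δ ^ 2 * ‖m - u‖ ^ 2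
      ≤ (1 + γ * μ / 2) * ‖w - zstar‖ ^ 2 + 2 * γ * ⟪aw - am, w - zstar⟫
        + (2 + 4 * γ * δ ^ 2 / μ + 4 / (γ * μ) + 8 * γ ^ 2 * δ ^ 2) * ‖u - w‖ ^ 2
        + 8 * γ ^ 2 * δ ^ 2 * ‖m - w‖ ^ 2 := by
  rw [norm_sub_rev w m] at hwm
  rw [norm_sub_rev aw au, norm_sub_rev w u] at hwu
  set a := ‖w - zstar‖
  set e := ‖u - w‖
  set f := ‖m - w‖
  have hε : 0 < γ * μ / 4 := by positivity
  have hsplit_norm : ‖u - zstar‖ ^ 2 = e ^ 2 + 2 * ⟪u - w, w - zstar⟫ + a ^ 2 := by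
    rw [show u - zstar = (u - w) + (w - zstar) by abel, norm_add_sq_real]
  have hsplit_inner : ⟪am - au, u - zstar⟫
      = -(⟪aw - am, w - zstar⟫ + ⟪au - aw, w - zstar⟫ + ⟪aw - am, u - w⟫ + ⟪au - aw, u - w⟫) := by
    rw [show am - au = -((aw - am) + (au - aw)) by abel,
      show u - zstar = (u - w) + (w - zstar) by abel, inner_neg_left, inner_add_left,
      inner_add_right, inner_add_right]
    ring
  have inner_uw_le : 2 * ⟪u - w, w - zstar⟫ ≤ γ * μ / 4 * a ^ 2 + 4 / (γ * μ) * e ^ 2 := by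
    have := two_mul_le_mul_sq_add_sq_div hε a e
    have hc : e ^ 2 / (γ * μ / 4) = 4 / (γ * μ) * e ^ 2 := by field_simp
    nlinarith [real_inner_le_norm (u - w) (w - zstar)]
  have inner_au_le :
      2 * γ * ⟪au - aw, w - zstar⟫ ≤ γ * μ / 4 * a ^ 2 + 4 * γ * δ ^ 2 / μ * e ^ 2 := by
    have := two_mul_le_mul_sq_add_sq_div hε a (γ * δ * e)
    have hc : (γ * δ * e) ^ 2 / (γ * μ / 4) = 4 * γ * δ ^ 2 / μ * e ^ 2 := by field_simp
    have hi : ⟪au - aw, w - zstar⟫ ≤ δ * e * a :=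
      (real_inner_le_norm _ _).trans (mul_le_mul_of_nonneg_right hwu (norm_nonneg _))
    nlinarith
  have inner_am_uw_le : 2 * γ * ⟪aw - am, u - w⟫ ≤ 4 * γ ^ 2 * δ ^ 2 * f ^ 2 + e ^ 2 / 4 := by
    have := two_mul_le_mul_sq_add_sq_div four_pos (γ * δ * f) e
    have hi : ⟪aw - am, u - w⟫ ≤ δ * f * e :=
      (real_inner_le_norm _ _).trans (mul_le_mul_of_nonneg_right hwm (norm_nonneg _))
    nlinarith
  have inner_au_uw_le : 2 * γ * ⟪au - aw, u - w⟫ ≤ 4 * γ ^ 2 * δ ^ 2 * e ^ 2 + e ^ 2 / 4 := by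
    have := two_mul_le_mul_sq_add_sq_div four_pos (γ * δ * e) e
    have hi : ⟪au - aw, u - w⟫ ≤ δ * e * e :=
      (real_inner_le_norm _ _).trans (mul_le_mul_of_nonneg_right hwu (norm_nonneg _))
    nlinarith
  have norm_mu_le : ‖m - u‖ ^ 2 ≤ 2 * f ^ 2 + 2 * e ^ 2 := by
    have := norm_add_sq_le_add_mul one_pos (m - w) (w - u)
    rw [sub_add_sub_cancel, norm_sub_rev w u] at this
    norm_num at this
    exact this
  rw [hsplit_norm, hsplit_inner]
  nlinarith [mul_le_mul_of_nonneg_left norm_mu_le (by positivity : 0 ≤ 2 * γ ^ 2 * δ ^ 2),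
    sq_nonneg e]

end InnerProduct

section Permutation

variable {ι : Type*} [Fintype ι] [DecidableEq ι]

theorem sum_perm_apply_eq {M : Type*} [AddCommMonoid M] (f : ι → M) (j j' : ι) :
    ∑ π : Equiv.Perm ι, f (π j) = ∑ π : Equiv.Perm ι, f (π j') :=
  Fintype.sum_equiv (Equiv.mulRight (Equiv.swap j j')) _ _ fun π => by
    simp [Equiv.Perm.mul_apply]

theorem card_nsmul_sum_perm_apply {M : Type*} [AddCommMonoid M] (f : ι → M) (j : ι) :
    Fintype.card ι • ∑ π : Equiv.Perm ι, f (π j)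
      = Fintype.card (Equiv.Perm ι) • ∑ k, f k := by
  calc Fintype.card ι • ∑ π : Equiv.Perm ι, f (π j)
      = ∑ j' : ι, ∑ π : Equiv.Perm ι, f (π j') := by
        rw [← card_univ, ← sum_const]
        exact sum_congr rfl fun j' _ => sum_perm_apply_eq f j j'
    _ = ∑ _π : Equiv.Perm ι, ∑ k, f k := by
        rw [sum_comm]
        exact sum_congr rfl fun π _ => Equiv.sum_comp π f
    _ = Fintype.card (Equiv.Perm ι) • ∑ k, f k := by rw [sum_const, card_univ]

theorem average_perm_apply {E : Type*} [AddCommGroup E] [Module ℝ E] (f : ι → E) (j : ι) :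
    (Fintype.card (Equiv.Perm ι) : ℝ)⁻¹ • ∑ π : Equiv.Perm ι, f (π j)
      = (Fintype.card ι : ℝ)⁻¹ • ∑ k, f k := by
  have hι : (Fintype.card ι : ℝ) ≠ 0 := by
    have : Nonempty ι := ⟨j⟩
    positivity
  have hperm : (Fintype.card (Equiv.Perm ι) : ℝ) ≠ 0 := by positivity
  rw [inv_smul_eq_iff₀ hperm, smul_comm, eq_inv_smul_iff₀ hι, Nat.cast_smul_eq_nsmul,
    Nat.cast_smul_eq_nsmul, card_nsmul_sum_perm_apply]

def permScatter (π : Equiv.Perm ι) (c : ι → EuclideanSpace ℝ ι) : EuclideanSpace ℝ ι :=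
  ∑ j, EuclideanSpace.single (π j) (c j (π j))

theorem sum_single_apply_self (x : EuclideanSpace ℝ ι) :
    ∑ k, EuclideanSpace.single k (x k) = x := by
  ext j
  simp

theorem permScatter_apply (π : Equiv.Perm ι) (c : ι → EuclideanSpace ℝ ι) (k : ι) :
    permScatter π c k = c (π.symm k) k := by
  rw [permScatter, WithLp.ofLp_sum, Finset.sum_apply, Finset.sum_eq_single (π.symm k)]
  · simp
  · intro j _ hj
    rw [PiLp.single_apply, if_neg]
    rintro rfl
    exact hj (π.symm_apply_apply j).symm
  · simp

theorem norm_sq_permScatter (π : Equiv.Perm ι) (c : ι → EuclideanSpace ℝ ι) :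
    ‖permScatter π c‖ ^ 2 = ∑ j, c j (π j) ^ 2 := by
  rw [EuclideanSpace.real_norm_sq_eq, ← Equiv.sum_comp π]
  simp only [permScatter_apply, Equiv.symm_apply_apply]

theorem average_permScatter (c : ι → EuclideanSpace ℝ ι) :
    (Fintype.card (Equiv.Perm ι) : ℝ)⁻¹ • ∑ π : Equiv.Perm ι, permScatter π c
      = (Fintype.card ι : ℝ)⁻¹ • ∑ j, c j := by
  simp only [permScatter]
  rw [sum_comm, smul_sum, smul_sum]
  refine sum_congr rfl fun j _ => ?_
  rw [average_perm_apply (fun k => EuclideanSpace.single k (c j k)), sum_single_apply_self]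

theorem average_norm_sq_permScatter (c : ι → EuclideanSpace ℝ ι) :
    (Fintype.card (Equiv.Perm ι) : ℝ)⁻¹ * ∑ π : Equiv.Perm ι, ‖permScatter π c‖ ^ 2
      = (Fintype.card ι : ℝ)⁻¹ * ∑ j, ‖c j‖ ^ 2 := by
  simp only [norm_sq_permScatter]
  rw [sum_comm, mul_sum, mul_sum]
  refine sum_congr rfl fun j _ => ?_
  simpa only [smul_eq_mul, EuclideanSpace.real_norm_sq_eq] using
    average_perm_apply (fun k => c j k ^ 2) j

end Permutation

section Blocks

variable {n q : ℕ}

def blockOf (n q : ℕ) (j : Fin (q * n)) : Fin n :=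
  (Fin.cast (Nat.mul_comm q n) j).divNat

theorem blockOf_eq_iff (j : Fin (q * n)) (i : Fin n) :
    blockOf n q j = i ↔ q * (i : ℕ) ≤ j ∧ (j : ℕ) < q * ((i : ℕ) + 1) := by
  have hq : 0 < q := Nat.pos_of_ne_zero fun h => by simpa [h] using j.2
  rw [Fin.ext_iff, blockOf, Fin.coe_divNat, Fin.val_cast, Nat.div_eq_iff hq,
    mul_add, mul_one, mul_comm q (i : ℕ)]
  generalize (i : ℕ) * q = a
  omega

theorem sum_blockOf {M : Type*} [AddCommMonoid M] (g : Fin n → M) :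
    ∑ j : Fin (q * n), g (blockOf n q j) = q • ∑ i, g i := by
  rw [Fintype.sum_equiv ((finCongr (Nat.mul_comm q n)).trans finProdFinEquiv.symm)
    (fun j => g (blockOf n q j)) (fun x => g x.1) fun j => rfl, Fintype.sum_prod_type]
  simp [smul_sum]

theorem inv_smul_sum_Qperm (hn : n ≠ 0) (π : Equiv.Perm (Fin (q * n)))
    (y : Fin n → EuclideanSpace ℝ (Fin (q * n))) :
    (n : ℝ)⁻¹ • ∑ i, Qperm n q (q * n) π i (y i) = permScatter π fun j => y (blockOf n q j) := by
  simp only [Qperm, ← smul_sum, smul_smul, inv_mul_cancel₀ (Nat.cast_ne_zero (R := ℝ).mpr hn),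
    one_smul, permScatter]
  rw [← sum_fiberwise univ (blockOf n q)]
  refine sum_congr rfl fun i _ => ?_
  refine sum_congr (by ext j; simp [blockOf_eq_iff]) fun j hj => ?_
  rw [(mem_filter.mp hj).2]

theorem average_Qperm (hn : n ≠ 0) (hq : q ≠ 0) (y : Fin n → EuclideanSpace ℝ (Fin (q * n))) :
    (Fintype.card (Equiv.Perm (Fin (q * n))) : ℝ)⁻¹ •
        ∑ π : Equiv.Perm (Fin (q * n)), (n : ℝ)⁻¹ • ∑ i, Qperm n q (q * n) π i (y i)
      = (n : ℝ)⁻¹ • ∑ i, y i := by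
  simp only [inv_smul_sum_Qperm hn, average_permScatter, sum_blockOf, Fintype.card_fin,
    ← Nat.cast_smul_eq_nsmul ℝ, smul_smul]
  congr 1
  push_cast
  field_simp

theorem average_norm_sq_Qperm (hn : n ≠ 0) (hq : q ≠ 0)
    (y : Fin n → EuclideanSpace ℝ (Fin (q * n))) :
    (Fintype.card (Equiv.Perm (Fin (q * n))) : ℝ)⁻¹ *
        ∑ π : Equiv.Perm (Fin (q * n)), ‖(n : ℝ)⁻¹ • ∑ i, Qperm n q (q * n) π i (y i)‖ ^ 2
      = (n : ℝ)⁻¹ * ∑ i, ‖y i‖ ^ 2 := by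
  simp only [inv_smul_sum_Qperm hn, average_norm_sq_permScatter, Fintype.card_fin]
  rw [sum_blockOf (fun i => ‖y i‖ ^ 2), nsmul_eq_mul]
  push_cast
  field_simp

end Blocks

theorem average_norm_sq_proj_Qperm_step_le {n q : ℕ} (hn : n ≠ 0) (hq : q ≠ 0)
    {proj : EuclideanSpace ℝ (Fin (q * n)) → EuclideanSpace ℝ (Fin (q * n))}
    {zstar : EuclideanSpace ℝ (Fin (q * n))} (hproj : ∀ x, ⟪x - proj x, zstar - proj x⟫ ≤ 0)
    (u : EuclideanSpace ℝ (Fin (q * n))) (γ : ℝ) {w : Fin n → EuclideanSpace ℝ (Fin (q * n))}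
    (hw : ∑ i, w i = 0) {r : ℝ} (hr : ∀ i, ‖w i‖ ≤ r) (i₀ : Fin n) :
    (Fintype.card (Equiv.Perm (Fin (q * n))) : ℝ)⁻¹ * ∑ π : Equiv.Perm (Fin (q * n)),
        ‖proj (u + γ • ((n : ℝ)⁻¹ • ∑ i, Qperm n q (q * n) π i (w i - w i₀))) - zstar‖ ^ 2
      ≤ ‖u - zstar‖ ^ 2 - 2 * γ * ⟪w i₀, u - zstar⟫ + 2 * γ ^ 2 * r ^ 2 := by
  set X := fun π : Equiv.Perm (Fin (q * n)) => (n : ℝ)⁻¹ • ∑ i, Qperm n q (q * n) π i (w i - w i₀)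
  have hmean : (Fintype.card (Equiv.Perm (Fin (q * n))) : ℝ)⁻¹ • ∑ π, X π = -w i₀ := by
    rw [average_Qperm hn hq, sum_sub_distrib, hw, sum_const, card_univ, Fintype.card_fin,
      ← Nat.cast_smul_eq_nsmul ℝ, zero_sub, smul_neg, inv_smul_smul₀ (Nat.cast_ne_zero.mpr hn)]
  have hvar : (Fintype.card (Equiv.Perm (Fin (q * n))) : ℝ)⁻¹ * ∑ π, ‖X π‖ ^ 2 ≤ 2 * r ^ 2 := by
    rw [average_norm_sq_Qperm hn hq]
    simpa using average_norm_sub_sq_le hw hr i₀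
  calc _ ≤ (Fintype.card (Equiv.Perm (Fin (q * n))) : ℝ)⁻¹ * ∑ π, ‖u + γ • X π - zstar‖ ^ 2 := by
        refine mul_le_mul_of_nonneg_left (sum_le_sum fun π _ => ?_) (by positivity)
        exact norm_sub_sq_le_of_inner_nonpos (hproj _)
    _ = ‖u - zstar‖ ^ 2 - 2 * γ * ⟪w i₀, u - zstar⟫
          + γ ^ 2 * ((Fintype.card (Equiv.Perm (Fin (q * n))) : ℝ)⁻¹ * ∑ π, ‖X π‖ ^ 2) := by
        rw [average_norm_add_smul_sub_sq, hmean, inner_neg_left]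
        ring
    _ ≤ _ := by nlinarith [sq_nonneg γ]

theorem one_iteration_descent_compression_general
    (n q d : ℕ) (hn : 1 ≤ n) (hq : 1 ≤ q) (hd : d = q * n)
    (γ τ p μ δ : ℝ)
    (hγ : 0 < γ)
    (hμ : 0 < μ)
    (Z : Set (EuclideanSpace ℝ (Fin d)))
    (proj : EuclideanSpace ℝ (Fin d) → EuclideanSpace ℝ (Fin d))
    (hproj : ∀ x, ∀ y ∈ Z, ⟪x - proj x, y - proj x⟫ ≤ 0)
    (Fi : Fin n → EuclideanSpace ℝ (Fin d) → EuclideanSpace ℝ (Fin d))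
    (F : EuclideanSpace ℝ (Fin d) → EuclideanSpace ℝ (Fin d))
    (hF : ∀ w, F w = (n : ℝ)⁻¹ • ∑ i, Fi i w)
    (F1 : EuclideanSpace ℝ (Fin d) → EuclideanSpace ℝ (Fin d))
    (hF1 : F1 = Fi ⟨0, hn⟩)
    (hstrong : ∀ u ∈ Z, ∀ v ∈ Z, μ * ‖u - v‖ ^ 2 ≤ ⟪F u - F v, u - v⟫)
    (hrel : ∀ i, ∀ u ∈ Z, ∀ v ∈ Z,
      ‖(Fi i u - F u) - (Fi i v - F v)‖ ≤ δ * ‖u - v‖)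
    (zstar : EuclideanSpace ℝ (Fin d)) (hzstar : zstar ∈ Z)
    (hVI : ∀ w ∈ Z, 0 ≤ ⟪F zstar, w - zstar⟫)
    (z m u : EuclideanSpace ℝ (Fin d)) (hm : m ∈ Z) (hu : u ∈ Z)
    (G : EuclideanSpace ℝ (Fin d) → EuclideanSpace ℝ (Fin d))
    (hG : ∀ w, G w = F1 w - F1 m + F m + (1 / γ) • (w - z - τ • (m - z)))
    (uhat : EuclideanSpace ℝ (Fin d)) (huhat : uhat ∈ Z)
    (hVIhat : ∀ w ∈ Z, 0 ≤ ⟪G uhat, w - uhat⟫)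
    (zplus : Equiv.Perm (Fin d) → EuclideanSpace ℝ (Fin d))
    (hzplus : ∀ π, zplus π = proj (u + γ • ((n : ℝ)⁻¹ •
      ∑ i, Qperm n q d π i (Fi i m - F1 m - Fi i u + F1 u)))) :
    (Fintype.card (Equiv.Perm (Fin d)) : ℝ)⁻¹ *
          ∑ π : Equiv.Perm (Fin d), ‖zplus π - zstar‖ ^ 2
        + p * ‖z - zstar‖ ^ 2 + (1 - p) * ‖m - zstar‖ ^ 2
      ≤ (1 - τ + p - γ * μ / 2) * ‖z - zstar‖ ^ 2
        + (1 + τ - p - γ * μ / 2) * ‖m - zstar‖ ^ 2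
        + (2 + 4 * γ * δ ^ 2 / μ + 4 / (γ * μ) + 8 * γ ^ 2 * δ ^ 2) * ‖u - uhat‖ ^ 2
        - (1 - τ - 3 * γ * μ / 2) * ‖z - uhat‖ ^ 2
        - (τ - 3 * γ * μ / 2 - 8 * γ ^ 2 * δ ^ 2) * ‖m - uhat‖ ^ 2 := by
  subst hd hF1
  set i₀ : Fin n := ⟨0, hn⟩
  set w := fun i => (Fi i m - F m) - (Fi i u - F u)
  have hn0 : n ≠ 0 := Nat.one_le_iff_ne_zero.mp hn
  have hw : ∑ i, w i = 0 := by
    simp only [w, sum_sub_distrib, sum_sub_eq_zero_of_eq_inv_smul_sum hn0 hF, sub_self]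
  have hzplus' : ∀ π, zplus π
      = proj (u + γ • ((n : ℝ)⁻¹ • ∑ i, Qperm n q (q * n) π i (w i - w i₀))) := fun π => by
    rw [hzplus]
    congr! 6 with i
    simp only [w]
    abel
  have hstep := average_norm_sq_proj_Qperm_step_le hn0 (Nat.one_le_iff_ne_zero.mp hq)
    (fun x => hproj x zstar hzstar) u γ hw (fun i => hrel i m hm u hu) i₀
  have hmono : μ * ‖uhat - zstar‖ ^ 2 ≤ ⟪F uhat, uhat - zstar⟫ :=
    (hstrong uhat huhat zstar hzstar).trans (by rw [inner_sub_left]; linarith [hVI uhat huhat])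
  have hsub : G uhat = F uhat + ((Fi i₀ uhat - F uhat) - (Fi i₀ m - F m))
      + (1 / γ) • (uhat - (z + τ • (m - z))) := by
    rw [hG]
    module
  have hserver := server_step_le (mul_pos hγ hμ).le
    (prox_step_le hγ (hsub ▸ hVIhat zstar hzstar) hmono)
  have herror := inexact_solution_error_le (zstar := zstar) hγ hμ (hrel i₀ uhat huhat m hm)
    (hrel i₀ uhat huhat u hu)
  rw [mul_pow] at hstep
  simp only [hzplus']
  linarith

/-- one-iteration descent inequality of the Three Pillars Algorithm
with permutation compression (Lemma 2 of the paper). Here `û` is the exact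
solution of the server subproblem and `z⁺(π)` the compressed update, and the
left-hand side includes the expectation `p‖z − z*‖² + (1−p)‖m − z*‖²` of
`‖m⁺ − z*‖²`. -/
theorem one_iteration_descent_compression
    (n q d : ℕ) (hn : 1 ≤ n) (hq : 1 ≤ q) (hd : d = q * n)
    (γ τ p μ δ L : ℝ)
    (hγ : 0 < γ) (hτ0 : 0 ≤ τ) (hτ1 : τ ≤ 1) (hp0 : 0 ≤ p) (hp1 : p ≤ 1)
    (hμ : 0 < μ) (hδ : 0 ≤ δ)
    (Z : Set (EuclideanSpace ℝ (Fin d)))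
    (hZne : Z.Nonempty) (hZcl : IsClosed Z) (hZcv : Convex ℝ Z)
    (proj : EuclideanSpace ℝ (Fin d) → EuclideanSpace ℝ (Fin d))
    (hprojmem : ∀ x, proj x ∈ Z)
    (hproj : ∀ x, ∀ y ∈ Z, ⟪x - proj x, y - proj x⟫ ≤ 0)
    (Fi : Fin n → EuclideanSpace ℝ (Fin d) → EuclideanSpace ℝ (Fin d))
    (F : EuclideanSpace ℝ (Fin d) → EuclideanSpace ℝ (Fin d))
    (hF : ∀ w, F w = (n : ℝ)⁻¹ • ∑ i, Fi i w)
    (F1 : EuclideanSpace ℝ (Fin d) → EuclideanSpace ℝ (Fin d))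
    (hF1 : F1 = Fi ⟨0, hn⟩)
    (hLip : ∀ i, ∀ u ∈ Z, ∀ v ∈ Z, ‖Fi i u - Fi i v‖ ≤ L * ‖u - v‖)
    (hmono : ∀ i, ∀ u ∈ Z, ∀ v ∈ Z, 0 ≤ ⟪Fi i u - Fi i v, u - v⟫)
    (hstrong : ∀ u ∈ Z, ∀ v ∈ Z, μ * ‖u - v‖ ^ 2 ≤ ⟪F u - F v, u - v⟫)
    (hrel : ∀ i, ∀ u ∈ Z, ∀ v ∈ Z,
      ‖(Fi i u - F u) - (Fi i v - F v)‖ ≤ δ * ‖u - v‖)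
    (zstar : EuclideanSpace ℝ (Fin d)) (hzstar : zstar ∈ Z)
    (hVI : ∀ w ∈ Z, 0 ≤ ⟪F zstar, w - zstar⟫)
    (z m u : EuclideanSpace ℝ (Fin d)) (hz : z ∈ Z) (hm : m ∈ Z) (hu : u ∈ Z)
    (G : EuclideanSpace ℝ (Fin d) → EuclideanSpace ℝ (Fin d))
    (hG : ∀ w, G w = F1 w - F1 m + F m + (1 / γ) • (w - z - τ • (m - z)))
    (uhat : EuclideanSpace ℝ (Fin d)) (huhat : uhat ∈ Z)
    (hVIhat : ∀ w ∈ Z, 0 ≤ ⟪G uhat, w - uhat⟫)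
    (zplus : Equiv.Perm (Fin d) → EuclideanSpace ℝ (Fin d))
    (hzplus : ∀ π, zplus π = proj (u + γ • ((n : ℝ)⁻¹ •
      ∑ i, Qperm n q d π i (Fi i m - F1 m - Fi i u + F1 u)))) :
    (Fintype.card (Equiv.Perm (Fin d)) : ℝ)⁻¹ *
          ∑ π : Equiv.Perm (Fin d), ‖zplus π - zstar‖ ^ 2
        + p * ‖z - zstar‖ ^ 2 + (1 - p) * ‖m - zstar‖ ^ 2
      ≤ (1 - τ + p - γ * μ / 2) * ‖z - zstar‖ ^ 2
        + (1 + τ - p - γ * μ / 2) * ‖m - zstar‖ ^ 2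
        + (2 + 4 * γ * δ ^ 2 / μ + 4 / (γ * μ) + 8 * γ ^ 2 * δ ^ 2) * ‖u - uhat‖ ^ 2
        - (1 - τ - 3 * γ * μ / 2) * ‖z - uhat‖ ^ 2
        - (τ - 3 * γ * μ / 2 - 8 * γ ^ 2 * δ ^ 2) * ‖m - uhat‖ ^ 2 :=
  one_iteration_descent_compression_general n q d hn hq hd γ τ p μ δ hγ hμ Z proj hproj Fi F hF F1
    hF1 hstrong hrel zstar hzstar hVI z m u hm hu G hG uhat huhat hVIhat zplus hzplus
end
end

section
/- Fix an integer n ≥ 1 and reals L, μ, δ, p with 0 < μ ≤ L, 0 < δ ≤ 2L, 0 < p ≤ 1/4. Suppose Z, F_1, …, F_n, F satisfy Assumptions 1–3, and let z* ∈ Z be a solution of the VI for F on Z. Set τ = p and γ = min{ p/(3μ), √p/(4δ), c } where c is any real with c ≥ 1/L. Fix z, m ∈ Z, let û ∈ Z be a solution of the VI on Z for the operator G(w) = F_1(w) − F_1(m) + F(m) + (1/γ)(w − z − τ(m − z)), and let u ∈ Z be any point satisfying ‖u − û‖² ≤ (μp/(40L))·‖z − û‖². For each i ∈ {1, …, n},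 set z⁺(i) = proj_Z[u + γ·(F_i(m) − F_1(m) − F_i(u) + F_1(u))]. Then: (1/n)∑_{i=1}^n ‖z⁺(i) − z*‖² + p‖z − z*‖² + (1 − p)‖m − z*‖² ≤ (1 − γμ/2)·(‖z − z*‖² + ‖m − z*‖²). -/
/-!
The server point `û` is a resolvent step of `F₁ - F₁ m + F m` from `v = z + p • (m - z)`, so the
three-point identity and strong monotonicity at `z⋆` give
`‖û - z⋆‖² + ‖v - û‖² ≤ ‖v - z⋆‖² - 2γμ‖û - z⋆‖² - 2γ⟪e û, û - z⋆⟫` for the control-variate error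
`e w = F m - F₁ m - F w + F₁ w`. A client step is a projection, so it does not increase the distance
to `z⋆`, and the client corrections average to `e u`; δ-relatedness bounds each correction by
`2δ‖m - u‖` and `e u - e û` by `δ‖u - û‖`. Writing `‖v - ·‖²` as the convex combination of
`‖z - ·‖²` and `‖m - ·‖²` (the `‖z - m‖²` terms cancel) leaves a scalar inequality in the distances
to `û`, which the choice of `γ` closes by AM–GM.
-/

open scoped RealInnerProductSpace

noncomputable section

open Finset

section InnerProductSpace

variable {V : Type*} [NormedAddCommGroup V] [InnerProductSpace ℝ V]

theorem norm_sub_sq_le_of_inner_sub_nonpos {x y w : V} (h : ⟪x - y, w - y⟫ ≤ 0) :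
    ‖y - w‖ ^ 2 ≤ ‖x - w‖ ^ 2 := by
  have hxw := norm_add_sq_real (x - y) (y - w)
  rw [sub_add_sub_cancel, ← neg_sub w y, inner_neg_right, norm_neg, norm_sub_rev w y] at hxw
  linarith [sq_nonneg ‖x - y‖]

theorem norm_add_smul_sub_sub_sq (x y c : V) (p : ℝ) :
    ‖x + p • (y - x) - c‖ ^ 2
      = (1 - p) * ‖x - c‖ ^ 2 + p * ‖y - c‖ ^ 2 - p * (1 - p) * ‖x - y‖ ^ 2 := by
  rw [show x + p • (y - x) - c = (x - c) + p • ((y - c) - (x - c)) by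
      rw [sub_sub_sub_cancel_right]; abel, ← sub_sub_sub_cancel_right x y c]
  generalize x - c = a, y - c = b
  rw [norm_add_sq_real, norm_smul, mul_pow, Real.norm_eq_abs, sq_abs, real_inner_smul_right,
    inner_sub_right, real_inner_self_eq_norm_sq, norm_sub_rev b a, norm_sub_sq_real a b]
  ring

theorem norm_sub_sq_add_norm_sub_sq_le_of_inner_nonneg {g v x y : V} {γ : ℝ} (hγ : 0 < γ)
    (h : 0 ≤ ⟪g + γ⁻¹ • (x - v), y - x⟫) :
    ‖x - y‖ ^ 2 + ‖v - x‖ ^ 2 ≤ ‖v - y‖ ^ 2 + 2 * γ * ⟪g, y - x⟫ := by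
  rw [inner_add_left, real_inner_smul_left] at h
  have hγh : 0 ≤ γ * ⟪g, y - x⟫ + ⟪x - v, y - x⟫ := by
    simpa only [mul_add, mul_inv_cancel_left₀ hγ.ne'] using mul_nonneg hγ.le h
  have hvy := norm_add_sq_real (v - x) (x - y)
  rw [sub_add_sub_cancel, ← inner_neg_neg, neg_sub, neg_sub] at hvy
  linarith

end InnerProductSpace

section Operators

variable {V : Type*} [NormedAddCommGroup V] {ι : Type*}

def IsRelatedOn (Z : Set V) (Fi : ι → V → V) (F : V → V) (δ : ℝ) : Prop :=
  ∀ i, ∀ u ∈ Z, ∀ v ∈ Z, ‖(Fi i u - F u) - (Fi i v - F v)‖ ≤ δ * ‖u - v‖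

variable {Z : Set V} {Fi : ι → V → V} {F : V → V} {δ : ℝ}

theorem norm_sub_sub_add_le_of_related (hrel : IsRelatedOn Z Fi F δ) (j : ι) {x y : V}
    (hx : x ∈ Z) (hy : y ∈ Z) :
    ‖F x - Fi j x - F y + Fi j y‖ ≤ δ * ‖x - y‖ := by
  rw [show F x - Fi j x - F y + Fi j y = -((Fi j x - F x) - (Fi j y - F y)) by abel, norm_neg]
  exact hrel j x hx y hy

theorem norm_sub_sub_add_le_two_mul_of_related (hrel : IsRelatedOn Z Fi F δ) (i j : ι) {x y : V}
    (hx : x ∈ Z) (hy : y ∈ Z) :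
    ‖Fi i x - Fi j x - Fi i y + Fi j y‖ ≤ 2 * δ * ‖x - y‖ := by
  rw [show Fi i x - Fi j x - Fi i y + Fi j y
      = (F x - Fi j x - F y + Fi j y) - (F x - Fi i x - F y + Fi i y) by abel]
  linarith [norm_sub_le (F x - Fi j x - F y + Fi j y) (F x - Fi i x - F y + Fi i y),
    norm_sub_sub_add_le_of_related hrel i hx hy, norm_sub_sub_add_le_of_related hrel j hx hy]

variable [InnerProductSpace ℝ V]

theorem inner_sub_sub_add_le_of_related (hrel : IsRelatedOn Z Fi F δ) (j : ι) {m u û zs : V}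
    (hm : m ∈ Z) (hu : u ∈ Z) (hû : û ∈ Z) :
    ⟪F m - Fi j m - F u + Fi j u, u - zs⟫
      ≤ ⟪F m - Fi j m - F û + Fi j û, û - zs⟫
        + δ * ‖m - û‖ * ‖u - û‖ + δ * ‖û - u‖ * ‖u - zs‖ := by
  set c := F m - Fi j m - F û + Fi j û
  set e := F û - Fi j û - F u + Fi j u
  have hsplit : F m - Fi j m - F u + Fi j u = c + e := by simp only [c, e]; abel
  have hcu : ⟪c, u - zs⟫ = ⟪c, û - zs⟫ + ⟪c, u - û⟫ := by
    rw [← inner_add_right, sub_add_sub_cancel']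
  rw [hsplit, inner_add_left, hcu]
  have hc : ⟪c, u - û⟫ ≤ δ * ‖m - û‖ * ‖u - û‖ :=
    (real_inner_le_norm _ _).trans
      (mul_le_mul_of_nonneg_right (norm_sub_sub_add_le_of_related hrel j hm hû) (norm_nonneg _))
  have he : ⟪e, u - zs⟫ ≤ δ * ‖û - u‖ * ‖u - zs‖ :=
    (real_inner_le_norm _ _).trans
      (mul_le_mul_of_nonneg_right (norm_sub_sub_add_le_of_related hrel j hû hu) (norm_nonneg _))
  linarith

variable [Fintype ι]

theorem inv_card_smul_sum_sub_sub_add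
    (hF : ∀ w, F w = (Fintype.card ι : ℝ)⁻¹ • ∑ i, Fi i w) (j : ι) (x y : V) :
    (Fintype.card ι : ℝ)⁻¹ • ∑ i, (Fi i x - Fi j x - Fi i y + Fi j y)
      = F x - Fi j x - F y + Fi j y := by
  have hn : (Fintype.card ι : ℝ) ≠ 0 := by
    have : Nonempty ι := ⟨j⟩
    exact_mod_cast Fintype.card_ne_zero
  simp only [sum_add_distrib, sum_sub_distrib, sum_const, card_univ, smul_add, smul_sub, ← hF,
    ← Nat.cast_smul_eq_nsmul ℝ, smul_smul, inv_mul_cancel₀ hn, one_smul]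

theorem inv_card_mul_sum_norm_add_smul_sq_le [Nonempty ι] (x : V) (H : ι → V) {γ B : ℝ}
    (hH : ∀ i, ‖H i‖ ≤ B) :
    (Fintype.card ι : ℝ)⁻¹ * ∑ i, ‖x + γ • H i‖ ^ 2
      ≤ ‖x‖ ^ 2 + 2 * γ * ⟪(Fintype.card ι : ℝ)⁻¹ • ∑ i, H i, x⟫ + γ ^ 2 * B ^ 2 := by
  have hn : (Fintype.card ι : ℝ) ≠ 0 := by exact_mod_cast Fintype.card_ne_zero
  have hterm (i : ι) : ‖x + γ • H i‖ ^ 2 ≤ ‖x‖ ^ 2 + 2 * γ * ⟪H i, x⟫ + γ ^ 2 * B ^ 2 := by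
    have hHB : γ ^ 2 * ‖H i‖ ^ 2 ≤ γ ^ 2 * B ^ 2 := by
      gcongr; exact hH i
    rw [norm_add_sq_real, real_inner_smul_right, norm_smul, mul_pow, Real.norm_eq_abs, sq_abs,
      real_inner_comm]
    linarith
  calc (Fintype.card ι : ℝ)⁻¹ * ∑ i, ‖x + γ • H i‖ ^ 2
      ≤ (Fintype.card ι : ℝ)⁻¹ * ∑ i, (‖x‖ ^ 2 + 2 * γ * ⟪H i, x⟫ + γ ^ 2 * B ^ 2) := by
        gcongr with i; exact hterm i
    _ = _ := by
        rw [sum_add_distrib, sum_add_distrib, sum_const, sum_const, ← mul_sum, ← sum_inner,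
          card_univ, nsmul_eq_mul, nsmul_eq_mul, real_inner_smul_left]
        field_simp

theorem inv_card_mul_sum_norm_proj_sub_sq_le
    (hF : ∀ w, F w = (Fintype.card ι : ℝ)⁻¹ • ∑ i, Fi i w) (hrel : IsRelatedOn Z Fi F δ)
    {proj : V → V} (hproj : ∀ x, ∀ y ∈ Z, ⟪x - proj x, y - proj x⟫ ≤ 0)
    (j : ι) (γ : ℝ) {m u zs : V} (hm : m ∈ Z) (hu : u ∈ Z) (hzs : zs ∈ Z) :
    (Fintype.card ι : ℝ)⁻¹ * ∑ i, ‖proj (u + γ • (Fi i m - Fi j m - Fi i u + Fi j u)) - zs‖ ^ 2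
      ≤ ‖u - zs‖ ^ 2 + 2 * γ * ⟪F m - Fi j m - F u + Fi j u, u - zs⟫
        + γ ^ 2 * (2 * δ * ‖m - u‖) ^ 2 := by
  have : Nonempty ι := ⟨j⟩
  calc _ ≤ (Fintype.card ι : ℝ)⁻¹
          * ∑ i, ‖(u - zs) + γ • (Fi i m - Fi j m - Fi i u + Fi j u)‖ ^ 2 := by
        refine mul_le_mul_of_nonneg_left (sum_le_sum fun i _ ↦ ?_) (by positivity)
        rw [sub_add_eq_add_sub u zs]
        exact norm_sub_sq_le_of_inner_sub_nonpos (hproj _ zs hzs)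
    _ ≤ _ := inv_card_mul_sum_norm_add_smul_sq_le _ _
        fun i ↦ norm_sub_sub_add_le_two_mul_of_related hrel i j hm hu
    _ = _ := by rw [inv_card_smul_sum_sub_sub_add hF]

theorem inv_card_mul_sum_norm_proj_sub_sq_le_of_prox
    (hF : ∀ w, F w = (Fintype.card ι : ℝ)⁻¹ • ∑ i, Fi i w) (hrel : IsRelatedOn Z Fi F δ)
    {μ : ℝ} (hstrong : ∀ u ∈ Z, ∀ v ∈ Z, μ * ‖u - v‖ ^ 2 ≤ ⟪F u - F v, u - v⟫)
    {zs : V} (hzs : zs ∈ Z) (hVI : ∀ w ∈ Z, 0 ≤ ⟪F zs, w - zs⟫)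
    {proj : V → V} (hproj : ∀ x, ∀ y ∈ Z, ⟪x - proj x, y - proj x⟫ ≤ 0)
    (j : ι) {γ : ℝ} (hγ : 0 < γ) (hδ : 0 ≤ δ) {m v û u : V} (hm : m ∈ Z) (hû : û ∈ Z)
    (hu : u ∈ Z) (hûv : 0 ≤ ⟪Fi j û - Fi j m + F m + γ⁻¹ • (û - v), zs - û⟫) :
    (Fintype.card ι : ℝ)⁻¹ * ∑ i, ‖proj (u + γ • (Fi i m - Fi j m - Fi i u + Fi j u)) - zs‖ ^ 2
      ≤ ‖v - zs‖ ^ 2 - ‖v - û‖ ^ 2 - 2 * (γ * μ) * ‖û - zs‖ ^ 2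
        + 2 * ‖u - û‖ * ‖û - zs‖ + ‖u - û‖ ^ 2
        + 2 * (γ * δ) * (‖m - û‖ + ‖û - zs‖ + ‖u - û‖) * ‖u - û‖
        + 4 * (γ * δ) ^ 2 * (‖m - û‖ + ‖u - û‖) ^ 2 := by
  have hserver := norm_sub_sq_add_norm_sub_sq_le_of_inner_nonneg hγ hûv
  have hsplit : ⟪Fi j û - Fi j m + F m, zs - û⟫
      = -⟪F û, û - zs⟫ - ⟪F m - Fi j m - F û + Fi j û, û - zs⟫ := by
    rw [show Fi j û - Fi j m + F m = F û + (F m - Fi j m - F û + Fi j û) by abel, inner_add_left,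
      ← neg_sub û zs, inner_neg_right, inner_neg_right]
    ring
  rw [hsplit] at hserver
  have hFû : μ * ‖û - zs‖ ^ 2 ≤ ⟪F û, û - zs⟫ := by
    linarith [hstrong û hû zs hzs, hVI û hû, inner_sub_left (𝕜 := ℝ) (F û) (F zs) (û - zs)]
  have hclients := inv_card_mul_sum_norm_proj_sub_sq_le hF hrel hproj j γ hm hu hzs
  have hdist : ‖u - zs‖ ≤ ‖û - zs‖ + ‖u - û‖ := by
    rw [add_comm]; exact norm_sub_le_norm_sub_add_norm_sub _ _ _
  have hcorr : ⟪F m - Fi j m - F u + Fi j u, u - zs⟫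
      ≤ ⟪F m - Fi j m - F û + Fi j û, û - zs⟫
        + δ * (‖m - û‖ + ‖û - zs‖ + ‖u - û‖) * ‖u - û‖ := by
    have := inner_sub_sub_add_le_of_related hrel j hm hu hû (zs := zs)
    rw [norm_sub_rev û u] at this
    linarith [mul_le_mul_of_nonneg_left hdist (mul_nonneg hδ (norm_nonneg (u - û)))]
  have hdrift : (2 * δ * ‖m - u‖) ^ 2 ≤ (2 * δ * (‖m - û‖ + ‖u - û‖)) ^ 2 := by
    have : ‖m - u‖ ≤ ‖m - û‖ + ‖u - û‖ := by
      rw [norm_sub_rev u û]; exact norm_sub_le_norm_sub_add_norm_sub _ _ _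
    gcongr
  have hdist_sq : ‖u - zs‖ ^ 2 ≤ (‖û - zs‖ + ‖u - û‖) ^ 2 := by gcongr
  linarith [mul_le_mul_of_nonneg_left hFû hγ.le, mul_le_mul_of_nonneg_left hcorr hγ.le,
    mul_le_mul_of_nonneg_left hdrift (sq_nonneg γ)]

end Operators

theorem two_mul_le_mul_sq_add {x y k c : ℝ} (hk : 0 < k) (hy : y ^ 2 ≤ k * c) :
    2 * x * y ≤ k * x ^ 2 + c := by
  have hc : k⁻¹ * y ^ 2 ≤ c := by rwa [inv_mul_le_iff₀ hk]
  linarith [two_mul_le_add_mul_sq (a := x) (b := y) hk]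

/-- In the application `t = ‖z - û‖`, `w = ‖m - û‖`, `a = ‖û - z⋆‖`, `E = ‖u - û‖`, `g₁ = γμ` and
`g₂ = γδ`; the `E`- and `g₂`-terms are the costs of the inexact server step and of client drift. -/
theorem contraction_scalar_inequality {p g₁ g₂ t w a E : ℝ}
    (hp4 : p ≤ 1 / 4) (hg₁ : 0 < g₁) (hg₁p : g₁ ≤ p / 3) (hg₂ : 0 ≤ g₂) (hg₂p : g₂ ^ 2 ≤ p / 16)
    (ht : 0 ≤ t) (hw : 0 ≤ w) (hE : 0 ≤ E)
    (hEp : E ^ 2 ≤ p / 40 * t ^ 2) (hEg : 10 * E ^ 2 ≤ g₁ * t ^ 2) :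
    g₁ / 2 * ((t + a) ^ 2 + (w + a) ^ 2) + 2 * E * a + E ^ 2 + 2 * g₂ * (w + a + E) * E
        + 4 * g₂ ^ 2 * (w + E) ^ 2
      ≤ (1 - p) * t ^ 2 + p * w ^ 2 + 2 * g₁ * a ^ 2 := by
  have hp : 0 < p := by linarith
  have hEt : 12 * E ≤ t := by nlinarith
  have hg₂8 : g₂ ≤ 1 / 8 := by nlinarith
  have hg₂E : (g₂ * E) ^ 2 ≤ p / 16 * (g₁ * t ^ 2 / 10) := by
    rw [mul_pow]; gcongr; linarith
  have hg₂E' : (g₂ * E) ^ 2 ≤ p / 16 * (p / 40 * t ^ 2) := by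
    rw [mul_pow]; gcongr
  have hta : t * a ≤ 4 / 3 * t ^ 2 + 3 / 16 * a ^ 2 := by nlinarith [sq_nonneg (8 * t - 3 * a)]
  have hwa : w * a ≤ 4 / 3 * w ^ 2 + 3 / 16 * a ^ 2 := by nlinarith [sq_nonneg (8 * w - 3 * a)]
  have hEa : 2 * a * E ≤ g₁ / 2 * a ^ 2 + t ^ 2 / 5 :=
    two_mul_le_mul_sq_add (by positivity) (by linarith)
  have hg₂Ea : 2 * a * (g₂ * E) ≤ g₁ / 8 * a ^ 2 + p / 20 * t ^ 2 :=
    two_mul_le_mul_sq_add (by positivity) (by linarith)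
  have hg₂Ew : 2 * w * (g₂ * E) ≤ p / 20 * w ^ 2 + p / 32 * t ^ 2 :=
    two_mul_le_mul_sq_add (by positivity) (by linarith)
  have hg₂wE : 8 * g₂ ^ 2 * (w * E) ≤ p / 48 * (w ^ 2 + t ^ 2) := by
    have : w * (12 * E) ≤ w * t := by gcongr
    nlinarith [sq_nonneg (w - t), mul_nonneg hw hE]
  have hmain : g₁ / 2 * ((t + a) ^ 2 + (w + a) ^ 2)
      ≤ 11 / 18 * p * (t ^ 2 + w ^ 2) + 11 / 8 * g₁ * a ^ 2 := by
    linarith [mul_le_mul_of_nonneg_left hta hg₁.le, mul_le_mul_of_nonneg_left hwa hg₁.le,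
      mul_le_mul_of_nonneg_right hg₁p (sq_nonneg t), mul_le_mul_of_nonneg_right hg₁p (sq_nonneg w)]
  have hcross : 2 * g₂ * (w + a + E) * E
      ≤ p / 20 * w ^ 2 + p / 32 * t ^ 2 + g₁ / 8 * a ^ 2 + p / 20 * t ^ 2 + E ^ 2 / 4 := by
    linarith [mul_le_mul_of_nonneg_right hg₂8 (sq_nonneg E)]
  have hdrift :
      4 * g₂ ^ 2 * (w + E) ^ 2 ≤ p / 4 * w ^ 2 + p / 48 * (w ^ 2 + t ^ 2) + E ^ 2 / 16 := by
    linarith [mul_le_mul_of_nonneg_right hg₂p (sq_nonneg w),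
      mul_le_mul_of_nonneg_right hg₂p (sq_nonneg E), mul_le_mul_of_nonneg_right hp4 (sq_nonneg E)]
  linarith [mul_le_mul_of_nonneg_right hp4 (sq_nonneg t), mul_nonneg hp.le (sq_nonneg w),
    sq_nonneg t]

theorem stepsize_bounds {L μ δ p c γ : ℝ} (hμ : 0 < μ) (hμL : μ ≤ L) (hδ : 0 < δ)
    (hδL : δ ≤ 2 * L) (hp : 0 < p) (hp4 : p ≤ 1 / 4) (hc : 1 / L ≤ c)
    (hγ : γ = min (min (p / (3 * μ)) (√p / (4 * δ))) c) :
    0 < γ ∧ p / (4 * L) ≤ γ ∧ γ * μ ≤ p / 3 ∧ (γ * δ) ^ 2 ≤ p / 16 := by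
  have hL : 0 < L := hμ.trans_le hμL
  have hsqrt : √p ≤ 1 / 2 := by
    rw [Real.sqrt_le_left (by norm_num)]; linarith
  have hγμ : γ ≤ p / (3 * μ) := hγ ▸ (min_le_left _ _).trans (min_le_left _ _)
  have hγδ : γ ≤ √p / (4 * δ) := hγ ▸ (min_le_left _ _).trans (min_le_right _ _)
  have hlow : p / (4 * L) ≤ γ := by
    have hsqrtδ : √p * δ ≤ L := by nlinarith [Real.sqrt_nonneg p]
    rw [hγ]
    refine le_min (le_min ?_ ?_) ?_
    · exact div_le_div_of_nonneg_left hp.le (by positivity) (by linarith)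
    · rw [div_le_div_iff₀ (by positivity) (by positivity)]
      calc p * (4 * δ) = √p * √p * (4 * δ) := by rw [Real.mul_self_sqrt hp.le]
        _ = √p * (4 * (√p * δ)) := by ring
        _ ≤ √p * (4 * L) := by gcongr
    · calc p / (4 * L) ≤ 1 / L := by rw [div_le_div_iff₀ (by positivity) hL]; nlinarith
        _ ≤ c := hc
  have hγ0 : 0 < γ := (by positivity : (0 : ℝ) < p / (4 * L)).trans_le hlow
  refine ⟨hγ0, hlow, ?_, ?_⟩
  · rwa [le_div_iff₀ (by positivity), mul_comm 3, ← mul_assoc, ← le_div_iff₀ (by norm_num)] at hγμ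
  · have : γ * δ ≤ √p / 4 := by
      rwa [le_div_iff₀ (by positivity), mul_comm 4, ← mul_assoc, ← le_div_iff₀ (by norm_num)] at hγδ
    calc (γ * δ) ^ 2 ≤ (√p / 4) ^ 2 := by gcongr
      _ = p / 16 := by rw [div_pow, Real.sq_sqrt hp.le]; norm_num

theorem inexactness_bounds {L μ p γ E t : ℝ} (hμ : 0 < μ) (hμL : μ ≤ L) (hp : 0 < p)
    (hγ : p / (4 * L) ≤ γ) (hE : E ^ 2 ≤ μ * p / (40 * L) * t ^ 2) :
    E ^ 2 ≤ p / 40 * t ^ 2 ∧ 10 * E ^ 2 ≤ γ * μ * t ^ 2 := by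
  have hL : 0 < L := hμ.trans_le hμL
  have h₁ : μ * p / (40 * L) ≤ p / 40 := by
    rw [div_le_div_iff₀ (by positivity) (by norm_num)]; nlinarith
  have h₂ : 10 * (μ * p / (40 * L)) ≤ γ * μ := by
    calc 10 * (μ * p / (40 * L)) = p / (4 * L) * μ := by field_simp; ring
      _ ≤ γ * μ := by gcongr
  constructor
  · nlinarith [sq_nonneg t]
  · nlinarith [sq_nonneg t]

theorem one_iteration_contraction_general
    (n d : ℕ) (hn : 1 ≤ n)
    (L μ δ p : ℝ) (hμ : 0 < μ) (hμL : μ ≤ L) (hδ : 0 < δ) (hδL : δ ≤ 2 * L)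
    (hp : 0 < p) (hp4 : p ≤ 1 / 4)
    (Z : Set (EuclideanSpace ℝ (Fin d)))
    (proj : EuclideanSpace ℝ (Fin d) → EuclideanSpace ℝ (Fin d))
    (hproj : ∀ x, ∀ y ∈ Z, ⟪x - proj x, y - proj x⟫ ≤ 0)
    (Fi : Fin n → EuclideanSpace ℝ (Fin d) → EuclideanSpace ℝ (Fin d))
    (F : EuclideanSpace ℝ (Fin d) → EuclideanSpace ℝ (Fin d))
    (hF : ∀ w, F w = (n : ℝ)⁻¹ • ∑ i, Fi i w)
    (F1 : EuclideanSpace ℝ (Fin d) → EuclideanSpace ℝ (Fin d))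
    (hF1 : F1 = Fi ⟨0, hn⟩)
    (hstrong : ∀ u ∈ Z, ∀ v ∈ Z, μ * ‖u - v‖ ^ 2 ≤ ⟪F u - F v, u - v⟫)
    (hrel : ∀ i, ∀ u ∈ Z, ∀ v ∈ Z,
      ‖(Fi i u - F u) - (Fi i v - F v)‖ ≤ δ * ‖u - v‖)
    (zstar : EuclideanSpace ℝ (Fin d)) (hzstar : zstar ∈ Z)
    (hVI : ∀ w ∈ Z, 0 ≤ ⟪F zstar, w - zstar⟫)
    (τ γ c : ℝ) (hτ : τ = p) (hc : 1 / L ≤ c)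
    (hγ : γ = min (min (p / (3 * μ)) (Real.sqrt p / (4 * δ))) c)
    (z m : EuclideanSpace ℝ (Fin d)) (hm : m ∈ Z)
    (G : EuclideanSpace ℝ (Fin d) → EuclideanSpace ℝ (Fin d))
    (hG : ∀ w, G w = F1 w - F1 m + F m + (1 / γ) • (w - z - τ • (m - z)))
    (uhat : EuclideanSpace ℝ (Fin d)) (huhat : uhat ∈ Z)
    (hVIhat : ∀ w ∈ Z, 0 ≤ ⟪G uhat, w - uhat⟫)
    (u : EuclideanSpace ℝ (Fin d)) (hu : u ∈ Z)
    (huacc : ‖u - uhat‖ ^ 2 ≤ (μ * p / (40 * L)) * ‖z - uhat‖ ^ 2)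
    (zplus : Fin n → EuclideanSpace ℝ (Fin d))
    (hzplus : ∀ i, zplus i = proj (u + γ • (Fi i m - F1 m - Fi i u + F1 u))) :
    (n : ℝ)⁻¹ * ∑ i, ‖zplus i - zstar‖ ^ 2
        + p * ‖z - zstar‖ ^ 2 + (1 - p) * ‖m - zstar‖ ^ 2
      ≤ (1 - γ * μ / 2) * (‖z - zstar‖ ^ 2 + ‖m - zstar‖ ^ 2) := by
  subst F1 τ
  obtain ⟨hγ0, hγL, hγμ, hγδ⟩ := stepsize_bounds hμ hμL hδ hδL hp hp4 hc hγ
  obtain ⟨hEp, hEγ⟩ := inexactness_bounds hμ hμL hp hγL huacc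
  have hround := inv_card_mul_sum_norm_proj_sub_sq_le_of_prox
    (by simpa only [Fintype.card_fin] using hF) hrel hstrong hzstar hVI hproj ⟨0, hn⟩ hγ0 hδ.le
    hm huhat hu (v := z + p • (m - z))
    (by simpa only [hG, one_div, sub_sub] using hVIhat zstar hzstar)
  rw [Fintype.card_fin] at hround
  have hscalar := contraction_scalar_inequality (a := ‖uhat - zstar‖) hp4 (mul_pos hγ0 hμ) hγμ
    (by positivity) hγδ (norm_nonneg _) (norm_nonneg (m - uhat)) (norm_nonneg _) hEp hEγ
  have hz : γ * μ / 2 * ‖z - zstar‖ ^ 2 ≤ γ * μ / 2 * (‖z - uhat‖ + ‖uhat - zstar‖) ^ 2 := by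
    gcongr; exact norm_sub_le_norm_sub_add_norm_sub _ _ _
  have hm' : γ * μ / 2 * ‖m - zstar‖ ^ 2 ≤ γ * μ / 2 * (‖m - uhat‖ + ‖uhat - zstar‖) ^ 2 := by
    gcongr; exact norm_sub_le_norm_sub_add_norm_sub _ _ _
  simp only [hzplus]
  linarith [norm_add_smul_sub_sub_sq z m zstar p, norm_add_smul_sub_sub_sq z m uhat p]

/-- one-iteration contraction of the Three Pillars Algorithm with
partial participation, for the tuned parameters `τ = p`,
`γ = min{p/(3μ), √p/(4δ), c}` with `c ≥ 1/L`, and an inexact solution `u` of the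
server subproblem with accuracy `‖u − û‖² ≤ (μp/(40L))‖z − û‖²`. -/
theorem one_iteration_contraction
    (n d : ℕ) (hn : 1 ≤ n)
    (L μ δ p : ℝ) (hμ : 0 < μ) (hμL : μ ≤ L) (hδ : 0 < δ) (hδL : δ ≤ 2 * L)
    (hp : 0 < p) (hp4 : p ≤ 1 / 4)
    (Z : Set (EuclideanSpace ℝ (Fin d)))
    (hZne : Z.Nonempty) (hZcl : IsClosed Z) (hZcv : Convex ℝ Z)
    (proj : EuclideanSpace ℝ (Fin d) → EuclideanSpace ℝ (Fin d))
    (hprojmem : ∀ x, proj x ∈ Z)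
    (hproj : ∀ x, ∀ y ∈ Z, ⟪x - proj x, y - proj x⟫ ≤ 0)
    (Fi : Fin n → EuclideanSpace ℝ (Fin d) → EuclideanSpace ℝ (Fin d))
    (F : EuclideanSpace ℝ (Fin d) → EuclideanSpace ℝ (Fin d))
    (hF : ∀ w, F w = (n : ℝ)⁻¹ • ∑ i, Fi i w)
    (F1 : EuclideanSpace ℝ (Fin d) → EuclideanSpace ℝ (Fin d))
    (hF1 : F1 = Fi ⟨0, hn⟩)
    (hLip : ∀ i, ∀ u ∈ Z, ∀ v ∈ Z, ‖Fi i u - Fi i v‖ ≤ L * ‖u - v‖)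
    (hmono : ∀ i, ∀ u ∈ Z, ∀ v ∈ Z, 0 ≤ ⟪Fi i u - Fi i v, u - v⟫)
    (hstrong : ∀ u ∈ Z, ∀ v ∈ Z, μ * ‖u - v‖ ^ 2 ≤ ⟪F u - F v, u - v⟫)
    (hrel : ∀ i, ∀ u ∈ Z, ∀ v ∈ Z,
      ‖(Fi i u - F u) - (Fi i v - F v)‖ ≤ δ * ‖u - v‖)
    (zstar : EuclideanSpace ℝ (Fin d)) (hzstar : zstar ∈ Z)
    (hVI : ∀ w ∈ Z, 0 ≤ ⟪F zstar, w - zstar⟫)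
    (τ γ c : ℝ) (hτ : τ = p) (hc : 1 / L ≤ c)
    (hγ : γ = min (min (p / (3 * μ)) (Real.sqrt p / (4 * δ))) c)
    (z m : EuclideanSpace ℝ (Fin d)) (hz : z ∈ Z) (hm : m ∈ Z)
    (G : EuclideanSpace ℝ (Fin d) → EuclideanSpace ℝ (Fin d))
    (hG : ∀ w, G w = F1 w - F1 m + F m + (1 / γ) • (w - z - τ • (m - z)))
    (uhat : EuclideanSpace ℝ (Fin d)) (huhat : uhat ∈ Z)
    (hVIhat : ∀ w ∈ Z, 0 ≤ ⟪G uhat, w - uhat⟫)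
    (u : EuclideanSpace ℝ (Fin d)) (hu : u ∈ Z)
    (huacc : ‖u - uhat‖ ^ 2 ≤ (μ * p / (40 * L)) * ‖z - uhat‖ ^ 2)
    (zplus : Fin n → EuclideanSpace ℝ (Fin d))
    (hzplus : ∀ i, zplus i = proj (u + γ • (Fi i m - F1 m - Fi i u + F1 u))) :
    (n : ℝ)⁻¹ * ∑ i, ‖zplus i - zstar‖ ^ 2
        + p * ‖z - zstar‖ ^ 2 + (1 - p) * ‖m - zstar‖ ^ 2
      ≤ (1 - γ * μ / 2) * (‖z - zstar‖ ^ 2 + ‖m - zstar‖ ^ 2) :=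
  one_iteration_contraction_general n d hn L μ δ p hμ hμL hδ hδL hp hp4 Z proj hproj Fi F hF F1 hF1
    hstrong hrel zstar hzstar hVI τ γ c hτ hc hγ z m hm G hG uhat huhat hVIhat u hu huacc zplus
    hzplus
end
end

section
/- Let Z ⊆ ℝ^d be a nonempty closed convex set, and let F_1, F : ℝ^d → ℝ^d with F_1 L-Lipschitz and monotone on Z (L > 0). Fix reals μ, p with 0 < μ ≤ L and 0 < p ≤ 1, fix z, m ∈ Z and τ ∈ ℝ, and fix γ > 0 with γ ≤ (1/L)·(H/(4·log(40L/(μp))) − 1), where H ≥ 1 is an integer. Let G(w) = F_1(w) − F_1(m) + F(m) + (1/γ)(w − z − τ(m − z)), let û ∈ Z be a solution of the VI on Z for G, set η = 1/(4(L + 1/γ)), and define the extragradient iterates u_0 = z and, for t = 0, …, H−1, u_{t+1/2} = proj_Z[u_t − η·G(u_t)], u_{t+1} = proj_Z[u_t − η·G(u_{t+1/2})]. Then ‖u_H − û‖² ≤ (μp/(40L))·‖z − û‖². -/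
/-! The regularized operator `G` is `(1/γ)`-strongly monotone and `(L + 1/γ)`-Lipschitz on `Z`.
For such an operator one extragradient step with `η (L + 1/γ) = 1/4` shrinks `‖u - û‖²` by the
factor `1 - η/γ = 1 - 1/(4(γL + 1))`, so `H` steps shrink it by at most
`exp (-H / (4(γL + 1)))`, which the bound on `γ` makes at most `μp/(40L)`. -/

open scoped RealInnerProductSpace

noncomputable section

/-- Extragradient iterates: `u_{t+1/2} = proj_Z[u_t − η G(u_t)]`,
`u_{t+1} = proj_Z[u_t − η G(u_{t+1/2})]`. -/
def extraGrad {d : ℕ}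
    (proj G : EuclideanSpace ℝ (Fin d) → EuclideanSpace ℝ (Fin d))
    (η : ℝ) (u0 : EuclideanSpace ℝ (Fin d)) : ℕ → EuclideanSpace ℝ (Fin d)
  | 0 => u0
  | t + 1 =>
    let ut := extraGrad proj G η u0 t
    proj (ut - η • G (proj (ut - η • G ut)))

theorem le_div_of_le_div_comm {a b c : ℝ} (ha : 0 < a) (hb : 0 ≤ b) (h : a ≤ b / c) :
    c ≤ b / a := by
  have hc : 0 < c := by
    by_contra! hc
    linarith [div_nonpos_of_nonneg_of_nonpos hb hc]
  exact (le_div_comm₀ ha hc).1 h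

theorem one_sub_pow_le_inv_of_log_le {a K : ℝ} {n : ℕ} (ha : a ≤ 1) (hK : 0 < K)
    (hlog : Real.log K ≤ n * a) : (1 - a) ^ n ≤ K⁻¹ :=
  calc (1 - a) ^ n ≤ Real.exp (-a) ^ n :=
        pow_le_pow_left₀ (sub_nonneg.2 ha) (Real.one_sub_le_exp_neg a) n
    _ = Real.exp (-(n * a)) := by rw [← Real.exp_nat_mul]; ring_nf
    _ ≤ Real.exp (-Real.log K) := Real.exp_le_exp.2 (neg_le_neg hlog)
    _ = K⁻¹ := by rw [Real.exp_neg, Real.exp_log hK]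

section RegularizedOperator

variable {E : Type*} [NormedAddCommGroup E] [InnerProductSpace ℝ E] {Z : Set E} {A G : E → E}
  {c : ℝ}

theorem lipschitz_of_sub_eq_add_smul {L : ℝ} (hG : ∀ x y, G x - G y = A x - A y + c • (x - y))
    (hc : 0 ≤ c) (hA : ∀ x ∈ Z, ∀ y ∈ Z, ‖A x - A y‖ ≤ L * ‖x - y‖) :
    ∀ x ∈ Z, ∀ y ∈ Z, ‖G x - G y‖ ≤ (L + c) * ‖x - y‖ := by
  intro x hx y hy
  calc ‖G x - G y‖ ≤ ‖A x - A y‖ + ‖c • (x - y)‖ := hG x y ▸ norm_add_le _ _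
    _ ≤ L * ‖x - y‖ + c * ‖x - y‖ := by
        rw [norm_smul, Real.norm_of_nonneg hc]
        exact add_le_add_left (hA x hx y hy) _
    _ = (L + c) * ‖x - y‖ := by ring

theorem strongMonotone_of_sub_eq_add_smul (hG : ∀ x y, G x - G y = A x - A y + c • (x - y))
    (hA : ∀ x ∈ Z, ∀ y ∈ Z, 0 ≤ ⟪A x - A y, x - y⟫) :
    ∀ x ∈ Z, ∀ y ∈ Z, c * ‖x - y‖ ^ 2 ≤ ⟪G x - G y, x - y⟫ := by
  intro x hx y hy
  rw [hG, inner_add_left, real_inner_smul_left, real_inner_self_eq_norm_sq]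
  linarith [hA x hx y hy]

end RegularizedOperator

section ExtragradientStep

variable {E : Type*} [NormedAddCommGroup E] [InnerProductSpace ℝ E]

theorem norm_sub_sq_le_of_projection_inequalities {u w v uhat gu gw : E} {η : ℝ}
    (hw : ⟪u - η • gu - w, v - w⟫ ≤ 0) (hv : ⟪u - η • gw - v, uhat - v⟫ ≤ 0) :
    ‖v - uhat‖ ^ 2 ≤ ‖u - uhat‖ ^ 2 - ‖w - u‖ ^ 2 - ‖v - w‖ ^ 2
      + 2 * η * ⟪gw - gu, w - v⟫ - 2 * η * ⟪gw, w - uhat⟫ := by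
  simp only [← real_inner_self_eq_norm_sq, inner_sub_left, inner_sub_right,
    real_inner_smul_right, real_inner_comm] at hw hv ⊢
  linarith

theorem extragradient_step_contraction {Z : Set E} {proj G : E → E} {M α η : ℝ} {u uhat : E}
    (hprojmem : ∀ x, proj x ∈ Z) (hproj : ∀ x, ∀ y ∈ Z, ⟪x - proj x, y - proj x⟫ ≤ 0)
    (hLip : ∀ x ∈ Z, ∀ y ∈ Z, ‖G x - G y‖ ≤ M * ‖x - y‖)
    (hstrong : ∀ x ∈ Z, ∀ y ∈ Z, α * ‖x - y‖ ^ 2 ≤ ⟪G x - G y, x - y⟫)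
    (huhat : uhat ∈ Z) (hVI : ∀ x ∈ Z, 0 ≤ ⟪G uhat, x - uhat⟫)
    (hη : 0 ≤ η) (hηM : η * M ≤ 1 / 4) (hα : 0 ≤ α) (hαM : α ≤ M) (hu : u ∈ Z) :
    ‖proj (u - η • G (proj (u - η • G u))) - uhat‖ ^ 2 ≤ (1 - η * α) * ‖u - uhat‖ ^ 2 := by
  set w := proj (u - η • G u)
  set v := proj (u - η • G w)
  have hw : w ∈ Z := hprojmem _
  have hbase := norm_sub_sq_le_of_projection_inequalities
    (hproj (u - η • G u) v (hprojmem _)) (hproj (u - η • G w) uhat huhat)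
  have hcross : 2 * η * ⟪G w - G u, w - v⟫ ≤ (1 / 4) * (‖w - u‖ ^ 2 + ‖v - w‖ ^ 2) := by
    have hηM0 : 0 ≤ η * M := mul_nonneg hη (hα.trans hαM)
    calc 2 * η * ⟪G w - G u, w - v⟫ ≤ 2 * η * (M * ‖w - u‖ * ‖w - v‖) := by
          gcongr
          exact (real_inner_le_norm _ _).trans
            (mul_le_mul_of_nonneg_right (hLip w hw u hu) (norm_nonneg _))
      _ ≤ η * M * (‖w - u‖ ^ 2 + ‖v - w‖ ^ 2) := by
          rw [norm_sub_rev w v]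
          nlinarith [sq_nonneg (‖w - u‖ - ‖v - w‖)]
      _ ≤ (1 / 4) * (‖w - u‖ ^ 2 + ‖v - w‖ ^ 2) := by gcongr
  have hsolution : 2 * η * (α * ‖w - uhat‖ ^ 2) ≤ 2 * η * ⟪G w, w - uhat⟫ := by
    have hsm := hstrong w hw uhat huhat
    rw [inner_sub_left] at hsm
    gcongr
    linarith [hVI w hw]
  have htriangle : ‖u - uhat‖ ^ 2 ≤ 2 * ‖w - u‖ ^ 2 + 2 * ‖w - uhat‖ ^ 2 := by
    have := norm_sub_le_norm_sub_add_norm_sub u w uhat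
    rw [norm_sub_rev u w] at this
    nlinarith [norm_nonneg (u - uhat), sq_nonneg (‖w - u‖ - ‖w - uhat‖)]
  have hηα : η * α ≤ 1 / 4 := (mul_le_mul_of_nonneg_left hαM hη).trans hηM
  -- `2ηα ≤ 3/4` lets `(3/4)‖w - u‖² + 2ηα‖w - û‖²` dominate `ηα‖u - û‖²` via `htriangle`
  nlinarith [mul_nonneg hη hα, sq_nonneg ‖w - u‖, sq_nonneg ‖w - uhat‖]

end ExtragradientStep

theorem extraGrad_mem {d : ℕ} {Z : Set (EuclideanSpace ℝ (Fin d))}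
    {proj G : EuclideanSpace ℝ (Fin d) → EuclideanSpace ℝ (Fin d)} {η : ℝ}
    {u0 : EuclideanSpace ℝ (Fin d)} (hprojmem : ∀ x, proj x ∈ Z) (hu0 : u0 ∈ Z) :
    ∀ t, extraGrad proj G η u0 t ∈ Z
  | 0 => hu0
  | _ + 1 => hprojmem _

theorem norm_extraGrad_sub_sq_le {d : ℕ} {Z : Set (EuclideanSpace ℝ (Fin d))}
    {proj G : EuclideanSpace ℝ (Fin d) → EuclideanSpace ℝ (Fin d)} {η ρ : ℝ}
    {u0 uhat : EuclideanSpace ℝ (Fin d)} (hprojmem : ∀ x, proj x ∈ Z) (hu0 : u0 ∈ Z)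
    (hρ : 0 ≤ ρ)
    (hstep : ∀ u ∈ Z, ‖proj (u - η • G (proj (u - η • G u))) - uhat‖ ^ 2 ≤ ρ * ‖u - uhat‖ ^ 2) :
    ∀ t, ‖extraGrad proj G η u0 t - uhat‖ ^ 2 ≤ ρ ^ t * ‖u0 - uhat‖ ^ 2
  | 0 => by simp [extraGrad]
  | t + 1 => calc
      ‖extraGrad proj G η u0 (t + 1) - uhat‖ ^ 2
          ≤ ρ * ‖extraGrad proj G η u0 t - uhat‖ ^ 2 :=
        hstep _ (extraGrad_mem hprojmem hu0 t)
      _ ≤ ρ * (ρ ^ t * ‖u0 - uhat‖ ^ 2) :=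
        mul_le_mul_of_nonneg_left (norm_extraGrad_sub_sq_le hprojmem hu0 hρ hstep t) hρ
      _ = ρ ^ (t + 1) * ‖u0 - uhat‖ ^ 2 := by ring

theorem extragradient_inner_loop_accuracy_general
    (d : ℕ) (Z : Set (EuclideanSpace ℝ (Fin d)))
    (proj : EuclideanSpace ℝ (Fin d) → EuclideanSpace ℝ (Fin d))
    (hprojmem : ∀ x, proj x ∈ Z)
    (hproj : ∀ x, ∀ y ∈ Z, ⟪x - proj x, y - proj x⟫ ≤ 0)
    (F1 F : EuclideanSpace ℝ (Fin d) → EuclideanSpace ℝ (Fin d))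
    (L : ℝ) (hL : 0 < L)
    (hLip : ∀ u ∈ Z, ∀ v ∈ Z, ‖F1 u - F1 v‖ ≤ L * ‖u - v‖)
    (hmono : ∀ u ∈ Z, ∀ v ∈ Z, 0 ≤ ⟪F1 u - F1 v, u - v⟫)
    (μ p : ℝ) (hμ : 0 < μ) (hp : 0 < p)
    (z m : EuclideanSpace ℝ (Fin d)) (hz : z ∈ Z) (τ : ℝ)
    (H : ℕ)
    (γ : ℝ) (hγ : 0 < γ)
    (hγub : γ ≤ (1 / L) * ((H : ℝ) / (4 * Real.log (40 * L / (μ * p))) - 1))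
    (G : EuclideanSpace ℝ (Fin d) → EuclideanSpace ℝ (Fin d))
    (hG : ∀ w, G w = F1 w - F1 m + F m + (1 / γ) • (w - z - τ • (m - z)))
    (uhat : EuclideanSpace ℝ (Fin d)) (huhat : uhat ∈ Z)
    (hVIhat : ∀ w ∈ Z, 0 ≤ ⟪G uhat, w - uhat⟫)
    (η : ℝ) (hη : η = 1 / (4 * (L + 1 / γ))) :
    ‖extraGrad proj G η z H - uhat‖ ^ 2
      ≤ (μ * p / (40 * L)) * ‖z - uhat‖ ^ 2 := by
  have hGsub : ∀ x y, G x - G y = F1 x - F1 y + (1 / γ) • (x - y) := fun x y => by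
    rw [hG, hG]; module
  have hηM : η * (L + 1 / γ) = 1 / 4 := by rw [hη]; field_simp
  have hηα : η * (1 / γ) = 1 / (4 * (γ * L + 1)) := by rw [hη]; field_simp
  have hstep : ∀ u ∈ Z, ‖proj (u - η • G (proj (u - η • G u))) - uhat‖ ^ 2
      ≤ (1 - η * (1 / γ)) * ‖u - uhat‖ ^ 2 := fun _ =>
    extragradient_step_contraction hprojmem hproj
      (lipschitz_of_sub_eq_add_smul hGsub (by positivity) hLip)
      (strongMonotone_of_sub_eq_add_smul hGsub hmono) huhat hVIhat (by rw [hη]; positivity)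
      hηM.le (by positivity) (by linarith)
  have hrate : 1 / (4 * (γ * L + 1)) ≤ 1 := by
    rw [div_le_one (by positivity)]
    nlinarith [mul_pos hγ hL]
  have hlog : 4 * Real.log (40 * L / (μ * p)) ≤ H / (γ * L + 1) := by
    rw [one_div, ← div_eq_inv_mul, le_div_iff₀ hL] at hγub
    exact le_div_of_le_div_comm (by positivity) H.cast_nonneg (by linarith)
  calc ‖extraGrad proj G η z H - uhat‖ ^ 2
      ≤ (1 - η * (1 / γ)) ^ H * ‖z - uhat‖ ^ 2 :=
        norm_extraGrad_sub_sq_le hprojmem hz (by rw [hηα]; linarith) hstep H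
    _ ≤ (μ * p / (40 * L)) * ‖z - uhat‖ ^ 2 := by
        rw [hηα, ← inv_div (40 * L)]
        gcongr
        refine one_sub_pow_le_inv_of_log_le hrate (by positivity) ?_
        rw [mul_one_div, le_div_iff₀ (by positivity)]
        linarith [(le_div_iff₀ (by positivity)).1 hlog]

/-- `H` extragradient steps on the regularized operator
`G(w) = F₁(w) − F₁(m) + F(m) + (1/γ)(w − z − τ(m − z))` with step
`η = 1/(4(L + 1/γ))` reach accuracy `‖u_H − û‖² ≤ (μp/(40L))‖z − û‖²`,
provided `γ ≤ (1/L)(H/(4 log(40L/(μp))) − 1)`. -/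
theorem extragradient_inner_loop_accuracy
    (d : ℕ) (Z : Set (EuclideanSpace ℝ (Fin d)))
    (hZne : Z.Nonempty) (hZcl : IsClosed Z) (hZcv : Convex ℝ Z)
    (proj : EuclideanSpace ℝ (Fin d) → EuclideanSpace ℝ (Fin d))
    (hprojmem : ∀ x, proj x ∈ Z)
    (hproj : ∀ x, ∀ y ∈ Z, ⟪x - proj x, y - proj x⟫ ≤ 0)
    (F1 F : EuclideanSpace ℝ (Fin d) → EuclideanSpace ℝ (Fin d))
    (L : ℝ) (hL : 0 < L)
    (hLip : ∀ u ∈ Z, ∀ v ∈ Z, ‖F1 u - F1 v‖ ≤ L * ‖u - v‖)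
    (hmono : ∀ u ∈ Z, ∀ v ∈ Z, 0 ≤ ⟪F1 u - F1 v, u - v⟫)
    (μ p : ℝ) (hμ : 0 < μ) (hμL : μ ≤ L) (hp : 0 < p) (hp1 : p ≤ 1)
    (z m : EuclideanSpace ℝ (Fin d)) (hz : z ∈ Z) (hm : m ∈ Z) (τ : ℝ)
    (H : ℕ) (hH : 1 ≤ H)
    (γ : ℝ) (hγ : 0 < γ)
    (hγub : γ ≤ (1 / L) * ((H : ℝ) / (4 * Real.log (40 * L / (μ * p))) - 1))
    (G : EuclideanSpace ℝ (Fin d) → EuclideanSpace ℝ (Fin d))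
    (hG : ∀ w, G w = F1 w - F1 m + F m + (1 / γ) • (w - z - τ • (m - z)))
    (uhat : EuclideanSpace ℝ (Fin d)) (huhat : uhat ∈ Z)
    (hVIhat : ∀ w ∈ Z, 0 ≤ ⟪G uhat, w - uhat⟫)
    (η : ℝ) (hη : η = 1 / (4 * (L + 1 / γ))) :
    ‖extraGrad proj G η z H - uhat‖ ^ 2
      ≤ (μ * p / (40 * L)) * ‖z - uhat‖ ^ 2 :=
  extragradient_inner_loop_accuracy_general d Z proj hprojmem hproj F1 F L hL hLip hmono μ p hμ hp z
    m hz τ H γ hγ hγub G hG uhat huhat hVIhat η hη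
end
end

section
/- Let n ≥ 1, q ≥ 1 be integers and d = q·n. For all vectors a_1, …, a_n ∈ ℝ^d, writing ā = (1/n)∑_{j=1}^n a_j, the permutation compressors satisfy: E_π‖ (1/n)∑_{i=1}^n Q_i^π(a_i) − ā ‖² ≤ (1/n)∑_{i=1}^n ‖a_i − ā‖². -/
/-!
Coordinate `k` of `n⁻¹ ∑ᵢ Qᵢ^π(aᵢ)` is the `k`-th coordinate of `a_β(π⁻¹ k)`, where
`β j = ⌊j / q⌋` is the device whose block contains position `j`. Since `π⁻¹ k` is uniformly
distributed over the `d` positions and every block has `q` of them, `β(π⁻¹ k)` is uniformly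
distributed over the `n` devices; averaging the squared norm coordinate by coordinate then gives
exactly `n⁻¹ ∑ᵢ ‖aᵢ − ā‖²`, so the bound holds with equality.
-/

noncomputable section

open Finset Equiv

section PermAverage

variable {α M : Type*} [Fintype α] [DecidableEq α] [AddCommMonoid M]

theorem sum_perm_apply_eq_s12 (k k' : α) (h : α → M) :
    ∑ π : Perm α, h (π k) = ∑ π : Perm α, h (π k') := by
  rw [← Equiv.sum_comp (Equiv.mulRight (swap k' k))]
  simp

theorem card_smul_sum_perm_apply (k : α) (h : α → M) :
    Fintype.card α • ∑ π : Perm α, h (π k) = Fintype.card (Perm α) • ∑ m, h m :=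
  calc Fintype.card α • ∑ π : Perm α, h (π k)
      = ∑ k' : α, ∑ π : Perm α, h (π k') := by
        rw [← card_univ, ← sum_const]
        exact sum_congr rfl fun k' _ => sum_perm_apply_eq_s12 k k' h
    _ = ∑ π : Perm α, ∑ m, h m := by
        rw [sum_comm]
        exact sum_congr rfl fun π _ => Equiv.sum_comp π h
    _ = Fintype.card (Perm α) • ∑ m, h m := by rw [sum_const, card_univ]

end PermAverage

def finBlock (q n : ℕ) (j : Fin (q * n)) : Fin n :=
  ⟨j / q, Nat.div_lt_of_lt_mul j.2⟩

theorem finBlock_eq_iff {q n : ℕ} (j : Fin (q * n)) (i : Fin n) :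
    finBlock q n j = i ↔ q * (i : ℕ) ≤ j ∧ (j : ℕ) < q * ((i : ℕ) + 1) := by
  have hq : 0 < q := Nat.pos_of_mul_pos_right j.pos
  rw [finBlock, Fin.ext_iff, Nat.div_eq_iff hq, Nat.mul_comm (i : ℕ), Nat.mul_succ]
  omega

theorem sum_finBlock {M : Type*} [AddCommMonoid M] (q n : ℕ) (g : Fin n → M) :
    ∑ j : Fin (q * n), g (finBlock q n j) = q • ∑ i, g i := by
  rw [← (finProdFinEquiv.trans (finCongr (Nat.mul_comm n q))).sum_comp, Fintype.sum_prod_type]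
  have hblock (i : Fin n) (r : Fin q) :
      finBlock q n (finCongr (Nat.mul_comm n q) (finProdFinEquiv (i, r))) = i := by
    rw [finBlock_eq_iff]
    simp only [finCongr_apply, Fin.val_cast, finProdFinEquiv_apply_val, Nat.mul_succ]
    omega
  simp only [Equiv.trans_apply, hblock, sum_const, card_univ, Fintype.card_fin, smul_sum]

theorem Qperm_apply {n q : ℕ} (π : Perm (Fin (q * n))) (i : Fin n)
    (u : EuclideanSpace ℝ (Fin (q * n))) (k : Fin (q * n)) :
    Qperm n q (q * n) π i u k = if finBlock q n (π⁻¹ k) = i then n * u k else 0 := by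
  simp_rw [Qperm, PiLp.smul_apply, WithLp.ofLp_sum, Finset.sum_apply,
    PiLp.single_apply, ← Perm.inv_eq_iff_eq, sum_ite_eq, mem_filter, mem_univ,
    true_and, ← finBlock_eq_iff, smul_eq_mul, mul_ite, mul_zero, Perm.coe_inv, apply_symm_apply]

theorem inv_smul_sum_Qperm_apply {n q : ℕ} (π : Perm (Fin (q * n)))
    (a : Fin n → EuclideanSpace ℝ (Fin (q * n))) (k : Fin (q * n)) :
    ((n : ℝ)⁻¹ • ∑ i, Qperm n q (q * n) π i (a i)) k = a (finBlock q n (π⁻¹ k)) k := by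
  have hn : (n : ℝ) ≠ 0 := Nat.cast_ne_zero.2 (Nat.pos_of_mul_pos_left k.pos).ne'
  simp_rw [PiLp.smul_apply, WithLp.ofLp_sum, Finset.sum_apply, Qperm_apply, sum_ite_eq,
    mem_univ, if_true, smul_eq_mul, inv_mul_cancel_left₀ hn]

theorem card_smul_sum_perm_finBlock_inv {M : Type*} [AddCommMonoid M] {n q : ℕ}
    (f : Fin n → Fin (q * n) → M) :
    (q * n) • ∑ π : Perm (Fin (q * n)), ∑ k, f (finBlock q n (π⁻¹ k)) k
      = (Fintype.card (Perm (Fin (q * n))) * q) • ∑ i, ∑ k, f i k :=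
  calc (q * n) • ∑ π : Perm (Fin (q * n)), ∑ k, f (finBlock q n (π⁻¹ k)) k
      = ∑ k, (q * n) • ∑ π : Perm (Fin (q * n)), f (finBlock q n (π k)) k := by
        rw [sum_comm, smul_sum]
        exact sum_congr rfl fun k _ =>
          congrArg _ (Equiv.sum_comp (Equiv.inv (Perm (Fin (q * n))))
            fun π : Perm (Fin (q * n)) => f (finBlock q n (π k)) k)
    _ = ∑ k, Fintype.card (Perm (Fin (q * n))) • q • ∑ i, f i k := by
        refine sum_congr rfl fun k _ => ?_
        rw [← sum_finBlock, ← card_smul_sum_perm_apply k, Fintype.card_fin]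
    _ = (Fintype.card (Perm (Fin (q * n))) * q) • ∑ i, ∑ k, f i k := by
        rw [mul_smul, ← smul_sum, ← smul_sum, sum_comm]

theorem perm_compressor_variance_eq {n q : ℕ} (hn : 0 < n) (hq : 0 < q)
    (a : Fin n → EuclideanSpace ℝ (Fin (q * n))) :
    (Fintype.card (Perm (Fin (q * n))) : ℝ)⁻¹ *
        ∑ π : Perm (Fin (q * n)),
          ‖(n : ℝ)⁻¹ • ∑ i, Qperm n q (q * n) π i (a i) - (n : ℝ)⁻¹ • ∑ j, a j‖ ^ 2
      = (n : ℝ)⁻¹ * ∑ i, ‖a i - (n : ℝ)⁻¹ • ∑ j, a j‖ ^ 2 := by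
  set abar : EuclideanSpace ℝ (Fin (q * n)) := (n : ℝ)⁻¹ • ∑ j, a j
  have hnorm (π : Perm (Fin (q * n))) :
      ‖(n : ℝ)⁻¹ • ∑ i, Qperm n q (q * n) π i (a i) - abar‖ ^ 2
        = ∑ k, ((a (finBlock q n (π⁻¹ k)) - abar) k) ^ 2 := by
    simp_rw [EuclideanSpace.real_norm_sq_eq, PiLp.sub_apply, inv_smul_sum_Qperm_apply]
  have key := card_smul_sum_perm_finBlock_inv fun i k => ((a i - abar) k) ^ 2
  simp_rw [← EuclideanSpace.real_norm_sq_eq, ← hnorm, nsmul_eq_mul] at key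
  push_cast at key
  have hcard : (Fintype.card (Perm (Fin (q * n))) : ℝ) ≠ 0 := Nat.cast_ne_zero.2 Fintype.card_ne_zero
  rw [inv_mul_eq_div, inv_mul_eq_div, div_eq_div_iff hcard (Nat.cast_ne_zero.2 hn.ne')]
  exact mul_left_cancel₀ (Nat.cast_ne_zero.2 hq.ne' : (q : ℝ) ≠ 0) (by linear_combination key)

/-- variance bound for the permutation compressors:
`E_π ‖(1/n)∑ᵢ Q_i^π(aᵢ) − ā‖² ≤ (1/n)∑ᵢ ‖aᵢ − ā‖²` where `ā = (1/n)∑ⱼ aⱼ`. -/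
theorem perm_compressor_variance_bound
    (n q d : ℕ) (hn : 1 ≤ n) (hq : 1 ≤ q) (hd : d = q * n)
    (a : Fin n → EuclideanSpace ℝ (Fin d)) :
    (Fintype.card (Equiv.Perm (Fin d)) : ℝ)⁻¹ *
        ∑ π : Equiv.Perm (Fin d),
          ‖(n : ℝ)⁻¹ • ∑ i, Qperm n q d π i (a i) - (n : ℝ)⁻¹ • ∑ j, a j‖ ^ 2
      ≤ (n : ℝ)⁻¹ * ∑ i, ‖a i - (n : ℝ)⁻¹ • ∑ j, a j‖ ^ 2 := by
  subst hd
  exact (perm_compressor_variance_eq hn hq a).le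
end
end

section
/- Let n ≥ 1, q ≥ 1 be integers and d = q·n. For all vectors a_1, …, a_n ∈ ℝ^d, the permutation compressors satisfy the second-moment bound: E_π‖ (1/n)∑_{i=1}^n Q_i^π(a_i) ‖² ≤ (1/n)∑_{i=1}^n ‖a_i‖². -/
noncomputable section

/-!
Since the blocks of the `Q_i^π` partition the coordinates,
`(1/n) ∑ᵢ Q_i^π(aᵢ) = ∑_j a_{⌊j/q⌋}(π_j) e_{π_j}`, a vector with squared norm
`∑_j a_{⌊j/q⌋}(π_j)²`. For fixed `j` the coordinate `π_j` is uniform, so this term has mean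
`‖a_{⌊j/q⌋}‖² / d`; every `i` is hit by `q` indices `j`, and `q / d = 1 / n`.
The bound is therefore an equality.
-/

open Finset

section Permutations

variable {α M : Type*} [Fintype α] [DecidableEq α]

lemma card_smul_sum_perm_apply_s14 [AddCommMonoid M] (f : α → M) (a : α) :
    Fintype.card α • ∑ σ : Equiv.Perm α, f (σ a) = Fintype.card (Equiv.Perm α) • ∑ b, f b := by
  have h_indep : ∀ b, ∑ σ : Equiv.Perm α, f (σ b) = ∑ σ : Equiv.Perm α, f (σ a) := fun b =>
    Fintype.sum_equiv (Equiv.mulRight (Equiv.swap b a)) _ _ fun σ => by simp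
  calc Fintype.card α • ∑ σ : Equiv.Perm α, f (σ a)
      = ∑ b, ∑ σ : Equiv.Perm α, f (σ b) := by simp [h_indep]
    _ = ∑ σ : Equiv.Perm α, ∑ b, f (σ b) := sum_comm
    _ = Fintype.card (Equiv.Perm α) • ∑ b, f b := by simp [Equiv.sum_comp]

lemma inv_card_perm_mul_sum_perm_apply (f : α → ℝ) (a : α) :
    (Fintype.card (Equiv.Perm α) : ℝ)⁻¹ * ∑ σ : Equiv.Perm α, f (σ a)
      = (Fintype.card α : ℝ)⁻¹ * ∑ b, f b := by
  have h := card_smul_sum_perm_apply_s14 f a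
  have : Nonempty α := ⟨a⟩
  simp only [nsmul_eq_mul] at h
  field_simp
  linarith

end Permutations

lemma EuclideanSpace.norm_sum_single_sq {ι κ : Type*} [Fintype ι] [Fintype κ] [DecidableEq κ]
    (σ : ι ≃ κ) (c : ι → ℝ) :
    ‖∑ j, EuclideanSpace.single (σ j) (c j)‖ ^ 2 = ∑ j, c j ^ 2 := by
  classical
  rw [EuclideanSpace.real_norm_sq_eq, ← σ.sum_comp]
  refine sum_congr rfl fun j _ => ?_
  simp [Pi.single_apply, EmbeddingLike.apply_eq_iff_eq]

section Blocks

variable {n q d : ℕ}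

/-- `j ↦ (j / q, j % q)`. -/
def blockEquiv (hd : d = q * n) : Fin d ≃ Fin n × Fin q :=
  (finCongr (hd.trans (Nat.mul_comm q n))).trans finProdFinEquiv.symm

lemma blockEquiv_fst_eq_iff (hq : 0 < q) (hd : d = q * n) (j : Fin d) (i : Fin n) :
    (blockEquiv hd j).1 = i ↔ q * i ≤ j ∧ j < q * (i + 1) := by
  rw [Fin.ext_iff]
  simp only [blockEquiv, Equiv.trans_apply, finProdFinEquiv_symm_apply, Fin.coe_divNat,
    finCongr_apply, Fin.val_cast, Nat.div_eq_iff hq]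
  rw [Nat.mul_add, Nat.mul_one, Nat.mul_comm q]
  omega

lemma sum_blockEquiv_fst {M : Type*} [AddCommMonoid M] (hd : d = q * n) (g : Fin n → M) :
    ∑ j, g (blockEquiv hd j).1 = q • ∑ i, g i := by
  rw [← (blockEquiv hd).symm.sum_comp]
  simp [Fintype.sum_prod_type, smul_sum]

lemma sum_Qperm (hq : 0 < q) (hd : d = q * n) (π : Equiv.Perm (Fin d))
    (a : Fin n → EuclideanSpace ℝ (Fin d)) :
    ∑ i, Qperm n q d π i (a i)
      = (n : ℝ) • ∑ j, EuclideanSpace.single (π j) (a (blockEquiv hd j).1 (π j)) := by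
  simp only [Qperm, ← smul_sum]
  rw [← sum_fiberwise univ (fun j => (blockEquiv hd j).1)]
  congr 1
  refine sum_congr rfl fun i _ => ?_
  rw [filter_congr fun j _ => (blockEquiv_fst_eq_iff hq hd j i).symm]
  exact sum_congr rfl fun j hj => by rw [(mem_filter.mp hj).2]

end Blocks

/-- second-moment bound for the permutation compressors:
`E_π ‖(1/n)∑ᵢ Q_i^π(aᵢ)‖² ≤ (1/n)∑ᵢ ‖aᵢ‖²`. -/
theorem perm_compressor_second_moment_bound
    (n q d : ℕ) (hn : 1 ≤ n) (hq : 1 ≤ q) (hd : d = q * n)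
    (a : Fin n → EuclideanSpace ℝ (Fin d)) :
    (Fintype.card (Equiv.Perm (Fin d)) : ℝ)⁻¹ *
        ∑ π : Equiv.Perm (Fin d),
          ‖(n : ℝ)⁻¹ • ∑ i, Qperm n q d π i (a i)‖ ^ 2
      ≤ (n : ℝ)⁻¹ * ∑ i, ‖a i‖ ^ 2 := by
  have h_norm (π : Equiv.Perm (Fin d)) : ‖(n : ℝ)⁻¹ • ∑ i, Qperm n q d π i (a i)‖ ^ 2
      = ∑ j, a (blockEquiv hd j).1 (π j) ^ 2 := by
    rw [sum_Qperm hq hd, inv_smul_smul₀ (by positivity), EuclideanSpace.norm_sum_single_sq]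
  have hd_real : (d : ℝ) = q * n := mod_cast hd
  refine le_of_eq ?_
  calc _ = ∑ j, (Fintype.card (Equiv.Perm (Fin d)) : ℝ)⁻¹ *
          ∑ π : Equiv.Perm (Fin d), a (blockEquiv hd j).1 (π j) ^ 2 := by
        simp only [h_norm]
        rw [sum_comm, mul_sum]
    _ = ∑ j, (d : ℝ)⁻¹ * ‖a (blockEquiv hd j).1‖ ^ 2 := by
        refine sum_congr rfl fun j _ => ?_
        rw [inv_card_perm_mul_sum_perm_apply (fun k => a (blockEquiv hd j).1 k ^ 2),
          EuclideanSpace.real_norm_sq_eq, Fintype.card_fin]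
    _ = (d : ℝ)⁻¹ * (q * ∑ i, ‖a i‖ ^ 2) := by
        rw [← mul_sum, sum_blockEquiv_fst hd (fun i => ‖a i‖ ^ 2), nsmul_eq_mul]
    _ = (n : ℝ)⁻¹ * ∑ i, ‖a i‖ ^ 2 := by
        rw [hd_real, mul_comm (q : ℝ), mul_inv, mul_assoc, inv_mul_cancel_left₀ (by positivity)]
end
end

section
/- Let L, μ, δ, p, c be real numbers with 0 < μ ≤ L, δ > 0, δ·√p ≤ L, 0 < p ≤ 1/4 and c ≥ 1/L, and set γ = min{ p/(3μ), √p/(4δ), c }. Then: 2 + 4γδ²/μ + 4/(γμ) + 8γ²δ² ≤ 20L/(μp). -/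
/-! With `κ = L / (μ p) ≥ 4`, the lower bound `p / (4 L) ≤ γ` gives `4 / (γ μ) ≤ 16 κ`, and
`γ ≤ √p / (4 δ)` gives `(γ δ)² ≤ p / 16`, which makes the three remaining terms at most
`κ / 2`, `κ / 4` and `κ / 32`; the total stays below `17 κ`. -/

lemma div_four_mul_le_sqrt_div {L δ p : ℝ} (hδ : 0 < δ) (hp : 0 < p)
    (hδp : δ * Real.sqrt p ≤ L) : p / (4 * L) ≤ Real.sqrt p / (4 * δ) := by
  have hsp : 0 < Real.sqrt p := Real.sqrt_pos.mpr hp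
  have hL : 0 < L := (mul_pos hδ hsp).trans_le hδp
  rw [div_le_div_iff₀ (by positivity) (by positivity)]
  calc p * (4 * δ) = 4 * Real.sqrt p * (δ * Real.sqrt p) := by
        linear_combination (4 * δ) * (Real.mul_self_sqrt hp.le).symm
    _ ≤ 4 * Real.sqrt p * L := by gcongr
    _ = Real.sqrt p * (4 * L) := by ring

lemma div_four_mul_le_min_step {L μ δ p c : ℝ} (hμ : 0 < μ) (hμL : μ ≤ L) (hδ : 0 < δ)
    (hδp : δ * Real.sqrt p ≤ L) (hp : 0 < p) (hp4 : p ≤ 4) (hc : 1 / L ≤ c) :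
    p / (4 * L) ≤ min (min (p / (3 * μ)) (Real.sqrt p / (4 * δ))) c := by
  have hL : 0 < L := hμ.trans_le hμL
  refine le_min (le_min ?_ (div_four_mul_le_sqrt_div hδ hp hδp)) ?_
  · exact div_le_div_of_nonneg_left hp.le (by positivity) (by linarith)
  · calc p / (4 * L) ≤ 4 / (4 * L) := by gcongr
      _ = 1 / L := by field_simp
      _ ≤ c := hc

lemma sixteen_mul_sq_le_of_le_sqrt_div {δ p γ : ℝ} (hδ : 0 < δ) (hp : 0 ≤ p) (hγ0 : 0 ≤ γ)
    (hγ : γ ≤ Real.sqrt p / (4 * δ)) : 16 * (γ * δ) ^ 2 ≤ p := by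
  have h4 : 4 * (γ * δ) ≤ Real.sqrt p := by
    rw [le_div_iff₀ (by positivity)] at hγ; linarith
  calc 16 * (γ * δ) ^ 2 = (4 * (γ * δ)) ^ 2 := by ring
    _ ≤ Real.sqrt p ^ 2 := by gcongr
    _ = p := Real.sq_sqrt hp

lemma step_estimate_of_bounds {L μ δ p γ : ℝ} (hμ : 0 < μ) (hμL : μ ≤ L) (hp : 0 < p)
    (hp4 : p ≤ 1 / 4) (hγ : p / (4 * L) ≤ γ) (hγδ : 16 * (γ * δ) ^ 2 ≤ p) :
    2 + 4 * γ * δ ^ 2 / μ + 4 / (γ * μ) + 8 * γ ^ 2 * δ ^ 2 ≤ 20 * L / (μ * p) := by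
  have hL : 0 < L := hμ.trans_le hμL
  have hγ0 : 0 < γ := (by positivity : 0 < p / (4 * L)).trans_le hγ
  set κ := L / (μ * p) with hκ
  have hκ4 : 4 ≤ κ := by
    rw [hκ, le_div_iff₀ (by positivity)]
    nlinarith [mul_le_mul hμL hp4 hp.le hL.le]
  have hinv : 1 / (γ * μ) ≤ 4 * κ := by
    calc 1 / (γ * μ) ≤ 1 / (p / (4 * L) * μ) := by gcongr
      _ = 4 * κ := by rw [hκ]; field_simp
  have hsecond : 4 * γ * δ ^ 2 / μ ≤ p * κ := by
    calc 4 * γ * δ ^ 2 / μ = 4 * (γ * δ) ^ 2 * (1 / (γ * μ)) := by field_simp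
      _ ≤ 4 * (p / 16) * (4 * κ) := by gcongr; linarith
      _ = p * κ := by ring
  have h20 : 20 * L / (μ * p) = 20 * κ := by rw [hκ]; ring
  have hpκ : p * κ ≤ κ / 4 := by nlinarith
  rw [h20, show 4 / (γ * μ) = 4 * (1 / (γ * μ)) by ring,
    show 8 * γ ^ 2 * δ ^ 2 = 8 * (γ * δ) ^ 2 by ring]
  linarith

/-- the key parameter estimate for the step size `γ` of the
Three Pillars Algorithm. -/
theorem gamma_parameter_estimate
    (L μ δ p c : ℝ) (hμ : 0 < μ) (hμL : μ ≤ L) (hδ : 0 < δ)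
    (hδp : δ * Real.sqrt p ≤ L) (hp : 0 < p) (hp4 : p ≤ 1 / 4)
    (hc : 1 / L ≤ c)
    (γ : ℝ)
    (hγ : γ = min (min (p / (3 * μ)) (Real.sqrt p / (4 * δ))) c) :
    2 + 4 * γ * δ ^ 2 / μ + 4 / (γ * μ) + 8 * γ ^ 2 * δ ^ 2
      ≤ 20 * L / (μ * p) := by
  have hlow : p / (4 * L) ≤ γ :=
    hγ ▸ div_four_mul_le_min_step hμ hμL hδ hδp hp (by linarith) hc
  have hγ0 : 0 ≤ γ := (div_nonneg hp.le (by linarith)).trans hlow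
  have hup : γ ≤ Real.sqrt p / (4 * δ) := hγ ▸ (min_le_left _ _).trans (min_le_right _ _)
  exact step_estimate_of_bounds hμ hμL hp hp4 hlow
    (sixteen_mul_sq_le_of_le_sqrt_div hδ hp.le hγ0 hup)
end
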